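/- arXiv:2309.11429 — 4 statements merged into one kernel-verified Lean document; each statement's English description precedes it below -/
import Mathlib

section
/- Let k ≥ 1, α ∈ (0,1), θ ∈ Δ([k]). Let ψ ∈ ℂ^{𝒳₁×…×𝒳ₖ} and φ ∈ ℂ^{𝒴₁×…×𝒴ₖ} be nonzero, and let ψ ⊗ φ ∈ ℂ^{(𝒳₁×𝒴₁)×…×(𝒳ₖ×𝒴ₖ)} be given by (ψ⊗φ)((x₁,y₁),…,(x_k,y_k)) = ψ(x₁,…,x_k)·φ(y₁,…,y_k). Then ρ^{α,θ}(ψ ⊗ φ) ≤ ρ^{α,θ}(ψ) + ρ^{α,θ}(φ). -/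
open Finset

noncomputable section

/-- A probability distribution on a finite set. -/
def probVec {X : Type*} [Fintype X] (Q : X → ℝ) : Prop :=
  (∀ x, 0 ≤ Q x) ∧ ∑ x, Q x = 1

/-- Shannon entropy (base 2) of a measure on a finite set; `0 · log 0 = 0`. -/
def shEnt {X : Type*} [Fintype X] (Q : X → ℝ) : ℝ :=
  -∑ x, Q x * Real.logb 2 (Q x)

/-- Kullback–Leibler divergence (base 2); terms with `Q x = 0` vanish. -/
def klD {X : Type*} [Fintype X] (Q P : X → ℝ) : ℝ :=
  ∑ x, Q x * Real.logb 2 (Q x / P x)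

/-- `j`-th marginal of a measure on a finite product. -/
def marg {k : ℕ} {𝒳 : Fin k → Type*} [∀ j, Fintype (𝒳 j)] [∀ j, DecidableEq (𝒳 j)]
    (P : (∀ j, 𝒳 j) → ℝ) (j : Fin k) : 𝒳 j → ℝ :=
  fun a => ∑ x : ∀ i, 𝒳 i, if x j = a then P x else 0

/-- The functional `H_{α,θ}(P)`. -/
def Hat {k : ℕ} {𝒳 : Fin k → Type*} [∀ j, Fintype (𝒳 j)] [∀ j, DecidableEq (𝒳 j)]
    (α : ℝ) (θ : Fin k → ℝ) (P : (∀ j, 𝒳 j) → ℝ) : ℝ :=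
  sSup { v : ℝ | ∃ Q : (∀ j, 𝒳 j) → ℝ, probVec Q ∧ (∀ x, P x = 0 → Q x = 0) ∧
    v = (∑ j, θ j * shEnt (marg Q j)) - α / (1 - α) * klD Q P }

/-- Rényi entropy of order `α` of a measure on a finite set. -/
def renyiEnt {X : Type*} [Fintype X] (α : ℝ) (μ : X → ℝ) : ℝ :=
  (1 / (1 - α)) * Real.logb 2 (∑ x, μ x ^ α)

/-- The vector obtained by applying the local unitaries `U j` to `ψ`. -/
def applyU {k : ℕ} {𝒳 : Fin k → Type*} [∀ j, Fintype (𝒳 j)]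
    (U : ∀ j, Matrix (𝒳 j) (𝒳 j) ℂ) (ψ : (∀ j, 𝒳 j) → ℂ) : (∀ j, 𝒳 j) → ℂ :=
  fun x => ∑ y : ∀ i, 𝒳 i, (∏ j, U j (x j) (y j)) * ψ y

/-- The measured distribution of `ψ` in the product basis determined by `U`. -/
def measd {k : ℕ} {𝒳 : Fin k → Type*} [∀ j, Fintype (𝒳 j)]
    (U : ∀ j, Matrix (𝒳 j) (𝒳 j) ℂ) (ψ : (∀ j, 𝒳 j) → ℂ) : (∀ j, 𝒳 j) → ℝ :=
  fun x => ‖applyU U ψ x‖ ^ 2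

/-- The functional `ρ^{α,θ}(ψ)`: the infimum of `H_{α,θ}` of the measured
distribution over all choices of local orthonormal bases. -/
def rhoAT {k : ℕ} {𝒳 : Fin k → Type*} [∀ j, Fintype (𝒳 j)] [∀ j, DecidableEq (𝒳 j)]
    (α : ℝ) (θ : Fin k → ℝ) (ψ : (∀ j, 𝒳 j) → ℂ) : ℝ :=
  sInf { v : ℝ | ∃ U : ∀ j, Matrix (𝒳 j) (𝒳 j) ℂ,
    (∀ j, U j ∈ Matrix.unitaryGroup (𝒳 j) ℂ) ∧ v = Hat α θ (measd U ψ) }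

/-- Tensor product of vectors, with the index sets paired factorwise. -/
def tensorV {k : ℕ} {𝒳 𝒴 : Fin k → Type*}
    (ψ : (∀ j, 𝒳 j) → ℂ) (φ : (∀ j, 𝒴 j) → ℂ) : (∀ j, 𝒳 j × 𝒴 j) → ℂ :=
  fun x => ψ (fun j => (x j).1) * φ (fun j => (x j).2)

lemma neg_klD_le {X : Type*} [Fintype X] (Q M : X → ℝ)
    (hQ0 : ∀ x, 0 ≤ Q x) (hQ1 : ∑ x, Q x = 1) (hM : ∀ x, 0 ≤ M x)
    (hs : ∀ x, M x = 0 → Q x = 0) :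
    -klD Q M ≤ (∑ x, M x - 1) / Real.log 2 := by
  have hlog2 : (0:ℝ) < Real.log 2 := Real.log_pos one_lt_two
  have key : ∀ x, -(Q x * Real.logb 2 (Q x / M x)) ≤ (M x - Q x) / Real.log 2 := by
    intro x
    rcases eq_or_lt_of_le (hQ0 x) with h | h
    · rw [← h]
      simp only [zero_mul, neg_zero, sub_zero]
      exact div_nonneg (hM x) (Real.log_nonneg one_le_two)
    · have hMx : 0 < M x := by
        rcases eq_or_lt_of_le (hM x) with h' | h'
        · exact absurd (hs x h'.symm) (ne_of_gt h)
        · exact h'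
      have h1 : Real.log (M x / Q x) ≤ M x / Q x - 1 :=
        Real.log_le_sub_one_of_pos (by positivity)
      have h2 : -(Q x * Real.logb 2 (Q x / M x)) = Q x * Real.log (M x / Q x) / Real.log 2 := by
        rw [Real.logb, Real.log_div (ne_of_gt h) (ne_of_gt hMx),
          Real.log_div (ne_of_gt hMx) (ne_of_gt h)]
        ring
      rw [h2, div_le_div_iff_of_pos_right hlog2]
      calc Q x * Real.log (M x / Q x) ≤ Q x * (M x / Q x - 1) := by
            exact mul_le_mul_of_nonneg_left h1 (le_of_lt h)
        _ = M x - Q x := by field_simp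
  calc -klD Q M = ∑ x, -(Q x * Real.logb 2 (Q x / M x)) := by
        simp [klD]
    _ ≤ ∑ x, (M x - Q x) / Real.log 2 := Finset.sum_le_sum fun x _ => key x
    _ = (∑ x, M x - 1) / Real.log 2 := by
        rw [← Finset.sum_div, Finset.sum_sub_distrib, hQ1]

lemma gibbs {X : Type*} [Fintype X] (Q M : X → ℝ)
    (hQ0 : ∀ x, 0 ≤ Q x) (hQ1 : ∑ x, Q x = 1) (hM : ∀ x, 0 ≤ M x)
    (hM1 : ∑ x, M x ≤ 1) (hs : ∀ x, M x = 0 → Q x = 0) :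
    0 ≤ klD Q M := by
  have h := neg_klD_le Q M hQ0 hQ1 hM hs
  have hlog2 : (0:ℝ) < Real.log 2 := Real.log_pos one_lt_two
  nlinarith [div_nonpos_of_nonpos_of_nonneg (by linarith : ∑ x, M x - 1 ≤ 0) hlog2.le]

lemma sum_prod_fst {A B : Type*} [Fintype A] [Fintype B] (Q : A × B → ℝ) (g : A → ℝ) :
    ∑ z : A × B, Q z * g z.1 = ∑ a, (∑ b, Q (a, b)) * g a := by
  rw [Fintype.sum_prod_type]
  simp [Finset.sum_mul]

lemma sum_prod_snd {A B : Type*} [Fintype A] [Fintype B] (Q : A × B → ℝ) (g : B → ℝ) :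
    ∑ z : A × B, Q z * g z.2 = ∑ b, (∑ a, Q (a, b)) * g b := by
  rw [Fintype.sum_prod_type_right]
  simp [Finset.sum_mul]

lemma shEnt_le_logb_card {X : Type*} [Fintype X] [Nonempty X] (Q : X → ℝ)
    (hQ0 : ∀ x, 0 ≤ Q x) (hQ1 : ∑ x, Q x = 1) :
    shEnt Q ≤ Real.logb 2 (Fintype.card X) := by
  have hn : (0:ℝ) < Fintype.card X := by exact_mod_cast Fintype.card_pos
  set u : X → ℝ := fun _ => ((Fintype.card X : ℝ))⁻¹ with hu
  have hg : 0 ≤ klD Q u := by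
    refine gibbs Q u hQ0 hQ1 (fun x => by rw [hu]; positivity) ?_ ?_
    · simp [hu, Finset.card_univ]
    · intro x hx
      exact absurd hx (by rw [hu]; positivity)
  have hid : klD Q u = -shEnt Q + Real.logb 2 (Fintype.card X) := by
    unfold klD shEnt
    rw [neg_neg]
    have hlc : Real.logb 2 (Fintype.card X) = ∑ x, Q x * Real.logb 2 (Fintype.card X) := by
      rw [← Finset.sum_mul, hQ1, one_mul]
    rw [hlc, ← Finset.sum_add_distrib]
    refine Finset.sum_congr rfl fun x _ => ?_
    rcases eq_or_lt_of_le (hQ0 x) with h | h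
    · simp [← h]
    · show Q x * Real.logb 2 (Q x / (u x)) = _
      rw [hu]
      rw [div_inv_eq_mul, Real.logb_mul (ne_of_gt h) (ne_of_gt hn), mul_add]
  linarith

lemma shEnt_subadd {A B : Type*} [Fintype A] [Fintype B] (R : A × B → ℝ)
    (h0 : ∀ z, 0 ≤ R z) (h1 : ∑ z, R z = 1) :
    shEnt R ≤ shEnt (fun a => ∑ b, R (a, b)) + shEnt (fun b => ∑ a, R (a, b)) := by
  set RA : A → ℝ := fun a => ∑ b, R (a, b) with hRA
  set RB : B → ℝ := fun b => ∑ a, R (a, b) with hRB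
  have hRA0 : ∀ a, 0 ≤ RA a := fun a => Finset.sum_nonneg fun b _ => h0 _
  have hRB0 : ∀ b, 0 ≤ RB b := fun b => Finset.sum_nonneg fun a _ => h0 _
  have hRA1 : ∑ a, RA a = 1 := by rw [← h1, Fintype.sum_prod_type]
  have hRB1 : ∑ b, RB b = 1 := by rw [← h1, Fintype.sum_prod_type_right]
  have hle1 : ∀ z : A × B, R z ≤ RA z.1 := fun z =>
    Finset.single_le_sum (f := fun b => R (z.1, b)) (fun b _ => h0 _) (Finset.mem_univ z.2)
  have hle2 : ∀ z : A × B, R z ≤ RB z.2 := fun z =>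
    Finset.single_le_sum (f := fun a => R (a, z.2)) (fun a _ => h0 _) (Finset.mem_univ z.1)
  set M : A × B → ℝ := fun z => RA z.1 * RB z.2 with hM
  have hg : 0 ≤ klD R M := by
    refine gibbs R M h0 h1 (fun z => mul_nonneg (hRA0 _) (hRB0 _)) ?_ ?_
    · rw [hM]
      have : ∑ z : A × B, RA z.1 * RB z.2 = (∑ a, RA a) * (∑ b, RB b) := by
        rw [Fintype.sum_prod_type, Finset.sum_mul_sum]
      rw [this, hRA1, hRB1, one_mul]
    · intro z hz
      rcases mul_eq_zero.1 hz with h | h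
      · exact le_antisymm (h ▸ hle1 z) (h0 z)
      · exact le_antisymm (h ▸ hle2 z) (h0 z)
  have hid : klD R M = -shEnt R + shEnt RA + shEnt RB := by
    have step : klD R M = (∑ z, R z * Real.logb 2 (R z))
        - (∑ z : A × B, R z * Real.logb 2 (RA z.1))
        - (∑ z : A × B, R z * Real.logb 2 (RB z.2)) := by
      unfold klD
      rw [← Finset.sum_sub_distrib, ← Finset.sum_sub_distrib]
      refine Finset.sum_congr rfl fun z _ => ?_
      rcases eq_or_lt_of_le (h0 z) with h | h
      · simp [← h]
      · have h1' : 0 < RA z.1 := lt_of_lt_of_le h (hle1 z)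
        have h2' : 0 < RB z.2 := lt_of_lt_of_le h (hle2 z)
        rw [hM, Real.logb_div (ne_of_gt h) (by positivity),
          Real.logb_mul (ne_of_gt h1') (ne_of_gt h2')]
        ring
    rw [step, sum_prod_fst R (fun a => Real.logb 2 (RA a)),
      sum_prod_snd R (fun b => Real.logb 2 (RB b))]
    unfold shEnt
    rw [hRA, hRB]
    ring
  linarith

lemma klD_prod {A B : Type*} [Fintype A] [Fintype B] (Q : A × B → ℝ) (P : A → ℝ) (P' : B → ℝ)
    (hQ0 : ∀ z, 0 ≤ Q z) (hQ1 : ∑ z, Q z = 1) (hP0 : ∀ a, 0 ≤ P a) (hP'0 : ∀ b, 0 ≤ P' b)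
    (hs : ∀ z : A × B, P z.1 * P' z.2 = 0 → Q z = 0) :
    klD (fun a => ∑ b, Q (a, b)) P + klD (fun b => ∑ a, Q (a, b)) P'
      ≤ klD Q (fun z => P z.1 * P' z.2) := by
  set QA : A → ℝ := fun a => ∑ b, Q (a, b) with hQA
  set QB : B → ℝ := fun b => ∑ a, Q (a, b) with hQB
  have hQA0 : ∀ a, 0 ≤ QA a := fun a => Finset.sum_nonneg fun b _ => hQ0 _
  have hQB0 : ∀ b, 0 ≤ QB b := fun b => Finset.sum_nonneg fun a _ => hQ0 _
  have hQA1 : ∑ a, QA a = 1 := by rw [← hQ1, Fintype.sum_prod_type]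
  have hQB1 : ∑ b, QB b = 1 := by rw [← hQ1, Fintype.sum_prod_type_right]
  have hle1 : ∀ z : A × B, Q z ≤ QA z.1 := fun z =>
    Finset.single_le_sum (f := fun b => Q (z.1, b)) (fun b _ => hQ0 _) (Finset.mem_univ z.2)
  have hle2 : ∀ z : A × B, Q z ≤ QB z.2 := fun z =>
    Finset.single_le_sum (f := fun a => Q (a, z.2)) (fun a _ => hQ0 _) (Finset.mem_univ z.1)
  set M : A × B → ℝ := fun z => QA z.1 * QB z.2 with hM
  have hg : 0 ≤ klD Q M := by
    refine gibbs Q M hQ0 hQ1 (fun z => mul_nonneg (hQA0 _) (hQB0 _)) ?_ ?_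
    · rw [hM]
      have : ∑ z : A × B, QA z.1 * QB z.2 = (∑ a, QA a) * (∑ b, QB b) := by
        rw [Fintype.sum_prod_type, Finset.sum_mul_sum]
      rw [this, hQA1, hQB1, one_mul]
    · intro z hz
      rcases mul_eq_zero.1 hz with h | h
      · exact le_antisymm (h ▸ hle1 z) (hQ0 z)
      · exact le_antisymm (h ▸ hle2 z) (hQ0 z)
  have hid : klD Q (fun z => P z.1 * P' z.2) = klD Q M + klD QA P + klD QB P' := by
    have step : klD Q (fun z => P z.1 * P' z.2) = (∑ z, Q z * Real.logb 2 (Q z / M z))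
        + (∑ z : A × B, Q z * Real.logb 2 (QA z.1 / P z.1))
        + (∑ z : A × B, Q z * Real.logb 2 (QB z.2 / P' z.2)) := by
      unfold klD
      rw [← Finset.sum_add_distrib, ← Finset.sum_add_distrib]
      refine Finset.sum_congr rfl fun z _ => ?_
      rcases eq_or_lt_of_le (hQ0 z) with h | h
      · simp [← h]
      · have hPz : P z.1 * P' z.2 ≠ 0 := fun hc => absurd (hs z hc) (ne_of_gt h)
        have hP1 : 0 < P z.1 := (hP0 z.1).lt_of_ne (Ne.symm (mul_ne_zero_iff.1 hPz).1)
        have hP2 : 0 < P' z.2 := (hP'0 z.2).lt_of_ne (Ne.symm (mul_ne_zero_iff.1 hPz).2)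
        have hA1 : 0 < QA z.1 := lt_of_lt_of_le h (hle1 z)
        have hB1 : 0 < QB z.2 := lt_of_lt_of_le h (hle2 z)
        rw [hM, Real.logb_div (ne_of_gt h) (by positivity),
          Real.logb_div (ne_of_gt h) (by positivity),
          Real.logb_div (ne_of_gt hA1) (ne_of_gt hP1),
          Real.logb_div (ne_of_gt hB1) (ne_of_gt hP2),
          Real.logb_mul (ne_of_gt hA1) (ne_of_gt hB1),
          Real.logb_mul (ne_of_gt hP1) (ne_of_gt hP2)]
        ring
    rw [step, sum_prod_fst Q (fun a => Real.logb 2 (QA a / P a)),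
      sum_prod_snd Q (fun b => Real.logb 2 (QB b / P' b))]
    unfold klD
    rw [hQA, hQB]
  linarith

lemma marg_nonneg {k : ℕ} {𝒳 : Fin k → Type*} [∀ j, Fintype (𝒳 j)] [∀ j, DecidableEq (𝒳 j)]
    {Q : (∀ j, 𝒳 j) → ℝ} (hQ : ∀ x, 0 ≤ Q x) (j : Fin k) (a : 𝒳 j) : 0 ≤ marg Q j a :=
  Finset.sum_nonneg fun x _ => by
    split_ifs
    · exact hQ x
    · exact le_refl 0

lemma marg_sum {k : ℕ} {𝒳 : Fin k → Type*} [∀ j, Fintype (𝒳 j)] [∀ j, DecidableEq (𝒳 j)]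
    (Q : (∀ j, 𝒳 j) → ℝ) (j : Fin k) : ∑ a, marg Q j a = ∑ x, Q x := by
  unfold marg
  rw [Finset.sum_comm]
  refine Finset.sum_congr rfl fun x _ => ?_
  simp

/-- Upper bound on every element of the `Hat` defining set. -/

lemma Hat_mem_le {k : ℕ} {𝒳 : Fin k → Type*} [∀ j, Fintype (𝒳 j)] [∀ j, DecidableEq (𝒳 j)]
    (α : ℝ) (θ : Fin k → ℝ) (P : (∀ j, 𝒳 j) → ℝ) (hc : 0 ≤ α / (1 - α))
    (hθ0 : ∀ j, 0 ≤ θ j) (hne : ∀ j, Nonempty (𝒳 j)) (hP0 : ∀ x, 0 ≤ P x) :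
    ∀ v ∈ { v : ℝ | ∃ Q : (∀ j, 𝒳 j) → ℝ, probVec Q ∧ (∀ x, P x = 0 → Q x = 0) ∧
      v = (∑ j, θ j * shEnt (marg Q j)) - α / (1 - α) * klD Q P },
      v ≤ (∑ j, θ j * Real.logb 2 (Fintype.card (𝒳 j)))
        + α / (1 - α) * ((∑ x, P x - 1) / Real.log 2) := by
  rintro v ⟨Q, ⟨hQ0, hQ1⟩, hsupp, rfl⟩
  have h1 : ∀ j, shEnt (marg Q j) ≤ Real.logb 2 (Fintype.card (𝒳 j)) := by
    intro j
    haveI := hne j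
    exact shEnt_le_logb_card (marg Q j) (marg_nonneg hQ0 j) (by rw [marg_sum, hQ1])
  have h2 : -klD Q P ≤ (∑ x, P x - 1) / Real.log 2 := neg_klD_le Q P hQ0 hQ1 hP0 hsupp
  have h3 : (∑ j, θ j * shEnt (marg Q j)) ≤ ∑ j, θ j * Real.logb 2 (Fintype.card (𝒳 j)) :=
    Finset.sum_le_sum fun j _ => mul_le_mul_of_nonneg_left (h1 j) (hθ0 j)
  nlinarith [mul_le_mul_of_nonneg_left h2 hc]

lemma Hat_bddAbove {k : ℕ} {𝒳 : Fin k → Type*} [∀ j, Fintype (𝒳 j)] [∀ j, DecidableEq (𝒳 j)]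
    (α : ℝ) (θ : Fin k → ℝ) (P : (∀ j, 𝒳 j) → ℝ) (hc : 0 ≤ α / (1 - α))
    (hθ0 : ∀ j, 0 ≤ θ j) (hne : ∀ j, Nonempty (𝒳 j)) (hP0 : ∀ x, 0 ≤ P x) :
    BddAbove { v : ℝ | ∃ Q : (∀ j, 𝒳 j) → ℝ, probVec Q ∧ (∀ x, P x = 0 → Q x = 0) ∧
      v = (∑ j, θ j * shEnt (marg Q j)) - α / (1 - α) * klD Q P } :=
  ⟨_, Hat_mem_le α θ P hc hθ0 hne hP0⟩

/-- The value of the point mass at `x₀`. -/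

lemma Hat_ge_delta {k : ℕ} {𝒳 : Fin k → Type*} [∀ j, Fintype (𝒳 j)] [∀ j, DecidableEq (𝒳 j)]
    (α : ℝ) (θ : Fin k → ℝ) (P : (∀ j, 𝒳 j) → ℝ) (hc : 0 ≤ α / (1 - α))
    (hθ0 : ∀ j, 0 ≤ θ j) (hP0 : ∀ x, 0 ≤ P x) (x₀ : ∀ j, 𝒳 j) (hx₀ : 0 < P x₀) :
    α / (1 - α) * Real.logb 2 (P x₀) ≤ Hat α θ P := by
  classical
  have hne : ∀ j, Nonempty (𝒳 j) := fun j => ⟨x₀ j⟩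
  set Q : (∀ j, 𝒳 j) → ℝ := fun x => if x = x₀ then 1 else 0 with hQ
  have hprob : probVec Q := by
    constructor
    · intro x
      simp only [hQ]
      split_ifs <;> norm_num
    · simp only [hQ]
      simp
  have hsupp : ∀ x, P x = 0 → Q x = 0 := by
    intro x hx
    have : x ≠ x₀ := fun h' => hx₀.ne' (h' ▸ hx)
    simp only [hQ]
    simp [this]
  have hmarg : ∀ j, shEnt (marg Q j) = 0 := by
    intro j
    have hm : ∀ a, marg Q j a = if x₀ j = a then 1 else 0 := by
      intro a
      unfold marg
      rw [Finset.sum_eq_single x₀]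
      · simp only [hQ]; simp
      · intro x _ hx
        simp only [hQ]; simp [hx]
      · intro h; exact absurd (Finset.mem_univ x₀) h
    unfold shEnt
    rw [neg_eq_zero]
    refine Finset.sum_eq_zero fun a _ => ?_
    rw [hm a]
    split_ifs <;> simp
  have hkl : klD Q P = -Real.logb 2 (P x₀) := by
    unfold klD
    rw [Finset.sum_eq_single x₀]
    · simp only [hQ, if_true, one_mul]
      rw [Real.logb_div one_ne_zero (ne_of_gt hx₀), Real.logb_one, zero_sub]
    · intro x _ hx
      simp only [hQ]; simp [hx]
    · intro h; exact absurd (Finset.mem_univ x₀) h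
  have hmem : α / (1 - α) * Real.logb 2 (P x₀) ∈
      { v : ℝ | ∃ Q : (∀ j, 𝒳 j) → ℝ, probVec Q ∧ (∀ x, P x = 0 → Q x = 0) ∧
        v = (∑ j, θ j * shEnt (marg Q j)) - α / (1 - α) * klD Q P } := by
    refine ⟨Q, hprob, hsupp, ?_⟩
    rw [hkl]
    have : ∑ j, θ j * shEnt (marg Q j) = 0 :=
      Finset.sum_eq_zero fun j _ => by rw [hmarg j, mul_zero]
    rw [this]
    ring
  exact le_csSup (Hat_bddAbove α θ P hc hθ0 hne hP0) hmem

def eqvP {k : ℕ} (𝒳 𝒴 : Fin k → Type*) : (∀ j, 𝒳 j × 𝒴 j) ≃ (∀ j, 𝒳 j) × (∀ j, 𝒴 j) where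
  toFun z := (fun j => (z j).1, fun j => (z j).2)
  invFun p := fun j => (p.1 j, p.2 j)
  left_inv z := rfl
  right_inv p := rfl

lemma sum_ite_pair {A B : Type*} [Fintype B] [DecidableEq A] [DecidableEq B]
    (p : A × B) (a : A) (c : ℝ) :
    (∑ b : B, if p = (a, b) then c else 0) = if p.1 = a then c else 0 := by
  obtain ⟨pa, pb⟩ := p
  by_cases h : pa = a
  · subst h
    simp [Prod.ext_iff]
  · simp [Prod.ext_iff, h]

lemma sum_ite_pair' {A B : Type*} [Fintype A] [DecidableEq A] [DecidableEq B]
    (p : A × B) (b : B) (c : ℝ) :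
    (∑ a : A, if p = (a, b) then c else 0) = if p.2 = b then c else 0 := by
  obtain ⟨pa, pb⟩ := p
  by_cases h : pb = b
  · subst h
    simp [Prod.ext_iff]
  · simp [Prod.ext_iff, h]

lemma Hat_prod_le {k : ℕ} {𝒳 𝒴 : Fin k → Type*}
    [∀ j, Fintype (𝒳 j)] [∀ j, DecidableEq (𝒳 j)]
    [∀ j, Fintype (𝒴 j)] [∀ j, DecidableEq (𝒴 j)]
    (α : ℝ) (hα : α ∈ Set.Ioo (0:ℝ) 1) (θ : Fin k → ℝ) (hθ : probVec θ)
    (P : (∀ j, 𝒳 j) → ℝ) (P' : (∀ j, 𝒴 j) → ℝ)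
    (hP0 : ∀ x, 0 ≤ P x) (hP'0 : ∀ y, 0 ≤ P' y)
    (hPex : ∃ x, 0 < P x) (hP'ex : ∃ y, 0 < P' y) :
    Hat α θ (fun z : ∀ j, 𝒳 j × 𝒴 j => P (fun j => (z j).1) * P' (fun j => (z j).2))
      ≤ Hat α θ P + Hat α θ P' := by
  classical
  obtain ⟨x₀, hx₀⟩ := hPex
  obtain ⟨y₀, hy₀⟩ := hP'ex
  obtain ⟨hα0, hα1⟩ := hα
  have hc : 0 ≤ α / (1 - α) := div_nonneg (le_of_lt hα0) (by linarith)
  have hθ0 : ∀ j, 0 ≤ θ j := hθ.1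
  have hne𝒳 : ∀ j, Nonempty (𝒳 j) := fun j => ⟨x₀ j⟩
  have hne𝒴 : ∀ j, Nonempty (𝒴 j) := fun j => ⟨y₀ j⟩
  set R : (∀ j, 𝒳 j × 𝒴 j) → ℝ :=
    fun z => P (fun j => (z j).1) * P' (fun j => (z j).2) with hR
  set e := eqvP 𝒳 𝒴 with he
  -- nonemptiness of the defining set for R
  have hRz₀ : 0 < R (fun j => (x₀ j, y₀ j)) := mul_pos hx₀ hy₀
  have hnonempty : { v : ℝ | ∃ Q : (∀ j, 𝒳 j × 𝒴 j) → ℝ, probVec Q ∧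
      (∀ z, R z = 0 → Q z = 0) ∧
      v = (∑ j, θ j * shEnt (marg Q j)) - α / (1 - α) * klD Q R }.Nonempty := by
    set z₀ : ∀ j, 𝒳 j × 𝒴 j := fun j => (x₀ j, y₀ j) with hz₀
    set Q0 : (∀ j, 𝒳 j × 𝒴 j) → ℝ := fun z => if z = z₀ then 1 else 0 with hQ0'
    refine ⟨_, Q0, ⟨?_, ?_⟩, ?_, rfl⟩
    · intro z
      simp only [hQ0']
      split_ifs <;> norm_num
    · simp only [hQ0']
      simp
    · intro z hz
      have : z ≠ z₀ := fun h' => hRz₀.ne' (h' ▸ hz)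
      simp only [hQ0']
      simp [this]
  refine csSup_le hnonempty ?_
  rintro v ⟨Q, ⟨hQ0, hQ1⟩, hsupp, rfl⟩
  set Q2 : ((∀ j, 𝒳 j) × (∀ j, 𝒴 j)) → ℝ := fun p => Q (fun j => (p.1 j, p.2 j)) with hQ2
  have hsum2 : ∑ p, Q2 p = 1 := by
    rw [← Equiv.sum_comp e Q2]
    exact hQ1
  set Qx : (∀ j, 𝒳 j) → ℝ := fun x => ∑ y, Q2 (x, y) with hQx
  set Qy : (∀ j, 𝒴 j) → ℝ := fun y => ∑ x, Q2 (x, y) with hQy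
  have hQx0 : ∀ x, 0 ≤ Qx x := fun x => Finset.sum_nonneg fun y _ => hQ0 _
  have hQy0 : ∀ y, 0 ≤ Qy y := fun y => Finset.sum_nonneg fun x _ => hQ0 _
  have hQx1 : ∑ x, Qx x = 1 := by rw [hQx, ← Fintype.sum_prod_type]; exact hsum2
  have hQy1 : ∑ y, Qy y = 1 := by rw [hQy, ← Fintype.sum_prod_type_right]; exact hsum2
  have hsuppx : ∀ x, P x = 0 → Qx x = 0 := by
    intro x hx
    refine Finset.sum_eq_zero fun y _ => ?_
    exact hsupp (fun j => (x j, y j)) (by show P x * P' y = 0; rw [hx, zero_mul])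
  have hsuppy : ∀ y, P' y = 0 → Qy y = 0 := by
    intro y hy
    refine Finset.sum_eq_zero fun x _ => ?_
    exact hsupp (fun j => (x j, y j)) (by show P x * P' y = 0; rw [hy, mul_zero])
  -- entropy subadditivity for each marginal
  have hent : ∀ j, shEnt (marg Q j) ≤ shEnt (marg Qx j) + shEnt (marg Qy j) := by
    intro j
    have hXeq : (fun a => ∑ b, marg Q j (a, b)) = marg Qx j := by
      funext a
      calc ∑ b, marg Q j (a, b)
          = ∑ z, (if (z j).1 = a then Q z else 0) := by
            unfold marg
            rw [Finset.sum_comm]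
            exact Finset.sum_congr rfl fun z _ => sum_ite_pair (z j) a (Q z)
        _ = ∑ p : (∀ j, 𝒳 j) × (∀ j, 𝒴 j), (if p.1 j = a then Q2 p else 0) :=
            Equiv.sum_comp e (fun p => if p.1 j = a then Q2 p else 0)
        _ = ∑ x, ∑ y, (if x j = a then Q2 (x, y) else 0) := Fintype.sum_prod_type _
        _ = ∑ x, (if x j = a then Qx x else 0) :=
            Finset.sum_congr rfl fun x _ => by by_cases h : x j = a <;> simp [h, hQx]
        _ = marg Qx j a := rfl
    have hYeq : (fun b => ∑ a, marg Q j (a, b)) = marg Qy j := by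
      funext b
      calc ∑ a, marg Q j (a, b)
          = ∑ z, (if (z j).2 = b then Q z else 0) := by
            unfold marg
            rw [Finset.sum_comm]
            exact Finset.sum_congr rfl fun z _ => sum_ite_pair' (z j) b (Q z)
        _ = ∑ p : (∀ j, 𝒳 j) × (∀ j, 𝒴 j), (if p.2 j = b then Q2 p else 0) :=
            Equiv.sum_comp e (fun p => if p.2 j = b then Q2 p else 0)
        _ = ∑ y, ∑ x, (if y j = b then Q2 (x, y) else 0) := Fintype.sum_prod_type_right _
        _ = ∑ y, (if y j = b then Qy y else 0) :=
            Finset.sum_congr rfl fun y _ => by by_cases h : y j = b <;> simp [h, hQy]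
        _ = marg Qy j b := rfl
    have h := shEnt_subadd (marg Q j) (marg_nonneg hQ0 j)
      (by rw [marg_sum (𝒳 := fun j => 𝒳 j × 𝒴 j) Q j, hQ1])
    rwa [hXeq, hYeq] at h
  -- KL superadditivity
  have hkl : klD Qx P + klD Qy P' ≤ klD Q R := by
    have hs : ∀ p : (∀ j, 𝒳 j) × (∀ j, 𝒴 j), P p.1 * P' p.2 = 0 → Q2 p = 0 :=
      fun p hp => hsupp (fun j => (p.1 j, p.2 j)) hp
    have h := klD_prod Q2 P P' (fun p => hQ0 _) hsum2 hP0 hP'0 hs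
    have he2 : klD Q2 (fun p => P p.1 * P' p.2) = klD Q R := by
      unfold klD
      rw [← Equiv.sum_comp e (fun p => Q2 p * Real.logb 2 (Q2 p / (P p.1 * P' p.2)))]
      rfl
    rw [he2] at h
    exact h
  -- assemble
  have hmemx : (∑ j, θ j * shEnt (marg Qx j)) - α / (1 - α) * klD Qx P ≤ Hat α θ P :=
    le_csSup (Hat_bddAbove α θ P hc hθ0 hne𝒳 hP0) ⟨Qx, ⟨hQx0, hQx1⟩, hsuppx, rfl⟩
  have hmemy : (∑ j, θ j * shEnt (marg Qy j)) - α / (1 - α) * klD Qy P' ≤ Hat α θ P' :=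
    le_csSup (Hat_bddAbove α θ P' hc hθ0 hne𝒴 hP'0) ⟨Qy, ⟨hQy0, hQy1⟩, hsuppy, rfl⟩
  have hsum : (∑ j, θ j * shEnt (marg Q j))
      ≤ (∑ j, θ j * shEnt (marg Qx j)) + (∑ j, θ j * shEnt (marg Qy j)) := by
    rw [← Finset.sum_add_distrib]
    refine Finset.sum_le_sum fun j _ => ?_
    rw [← mul_add]
    exact mul_le_mul_of_nonneg_left (hent j) (hθ0 j)
  have hklm := mul_le_mul_of_nonneg_left hkl hc
  linarith

def kronU {k : ℕ} {𝒳 𝒴 : Fin k → Type*}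
    (U : ∀ j, Matrix (𝒳 j) (𝒳 j) ℂ) (V : ∀ j, Matrix (𝒴 j) (𝒴 j) ℂ) :
    ∀ j, Matrix (𝒳 j × 𝒴 j) (𝒳 j × 𝒴 j) ℂ :=
  fun j => fun p q => U j p.1 q.1 * V j p.2 q.2

lemma kronU_unitary {k : ℕ} {𝒳 𝒴 : Fin k → Type*}
    [∀ j, Fintype (𝒳 j)] [∀ j, DecidableEq (𝒳 j)]
    [∀ j, Fintype (𝒴 j)] [∀ j, DecidableEq (𝒴 j)]
    {U : ∀ j, Matrix (𝒳 j) (𝒳 j) ℂ} {V : ∀ j, Matrix (𝒴 j) (𝒴 j) ℂ}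
    (hU : ∀ j, U j ∈ Matrix.unitaryGroup (𝒳 j) ℂ)
    (hV : ∀ j, V j ∈ Matrix.unitaryGroup (𝒴 j) ℂ) :
    ∀ j, kronU U V j ∈ Matrix.unitaryGroup (𝒳 j × 𝒴 j) ℂ := by
  intro j
  rw [Matrix.mem_unitaryGroup_iff']
  have hU' := Matrix.mem_unitaryGroup_iff'.mp (hU j)
  have hV' := Matrix.mem_unitaryGroup_iff'.mp (hV j)
  ext p q
  rw [Matrix.mul_apply, Matrix.one_apply]
  calc ∑ r : 𝒳 j × 𝒴 j, star (kronU U V j) p r * kronU U V j r q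
      = ∑ r : 𝒳 j × 𝒴 j, (star (U j) p.1 r.1 * U j r.1 q.1)
          * (star (V j) p.2 r.2 * V j r.2 q.2) := by
        refine Finset.sum_congr rfl fun r _ => ?_
        simp only [Matrix.star_apply, kronU, star_mul']
        ring
    _ = (∑ a, star (U j) p.1 a * U j a q.1) * (∑ b, star (V j) p.2 b * V j b q.2) := by
        rw [Finset.sum_mul_sum]
        exact Fintype.sum_prod_type _
    _ = (star (U j) * U j) p.1 q.1 * (star (V j) * V j) p.2 q.2 := by
        rw [Matrix.mul_apply, Matrix.mul_apply]
    _ = (1 : Matrix (𝒳 j) (𝒳 j) ℂ) p.1 q.1 * (1 : Matrix (𝒴 j) (𝒴 j) ℂ) p.2 q.2 := by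
        rw [hU', hV']
    _ = if p = q then 1 else 0 := by
        rw [Matrix.one_apply, Matrix.one_apply]
        by_cases h1 : p.1 = q.1 <;> by_cases h2 : p.2 = q.2 <;>
          simp [h1, h2, Prod.ext_iff]

lemma applyU_tensor {k : ℕ} {𝒳 𝒴 : Fin k → Type*}
    [∀ j, Fintype (𝒳 j)] [∀ j, Fintype (𝒴 j)]
    (U : ∀ j, Matrix (𝒳 j) (𝒳 j) ℂ) (V : ∀ j, Matrix (𝒴 j) (𝒴 j) ℂ)
    (ψ : (∀ j, 𝒳 j) → ℂ) (φ : (∀ j, 𝒴 j) → ℂ) (z : ∀ j, 𝒳 j × 𝒴 j) :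
    applyU (kronU U V) (tensorV ψ φ) z
      = applyU U ψ (fun j => (z j).1) * applyU V φ (fun j => (z j).2) := by
  calc applyU (kronU U V) (tensorV ψ φ) z
      = ∑ p : (∀ j, 𝒳 j) × (∀ j, 𝒴 j),
          (∏ j, U j (z j).1 (p.1 j) * V j (z j).2 (p.2 j)) * (ψ p.1 * φ p.2) :=
        (Equiv.sum_comp (eqvP 𝒳 𝒴).symm
          (fun w : ∀ j, 𝒳 j × 𝒴 j =>
            (∏ j, U j (z j).1 (w j).1 * V j (z j).2 (w j).2)
              * (ψ (fun j => (w j).1) * φ (fun j => (w j).2)))).symm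
    _ = ∑ x, ∑ y, (∏ j, U j (z j).1 (x j) * V j (z j).2 (y j)) * (ψ x * φ y) :=
        Fintype.sum_prod_type _
    _ = ∑ x, ∑ y, ((∏ j, U j (z j).1 (x j)) * ψ x) * ((∏ j, V j (z j).2 (y j)) * φ y) := by
        refine Finset.sum_congr rfl fun x _ => Finset.sum_congr rfl fun y _ => ?_
        rw [Finset.prod_mul_distrib]
        ring
    _ = applyU U ψ (fun j => (z j).1) * applyU V φ (fun j => (z j).2) :=
        (Finset.sum_mul_sum _ _ _ _).symm

lemma measd_tensor {k : ℕ} {𝒳 𝒴 : Fin k → Type*}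
    [∀ j, Fintype (𝒳 j)] [∀ j, Fintype (𝒴 j)]
    (U : ∀ j, Matrix (𝒳 j) (𝒳 j) ℂ) (V : ∀ j, Matrix (𝒴 j) (𝒴 j) ℂ)
    (ψ : (∀ j, 𝒳 j) → ℂ) (φ : (∀ j, 𝒴 j) → ℂ) :
    measd (kronU U V) (tensorV ψ φ)
      = fun z => measd U ψ (fun j => (z j).1) * measd V φ (fun j => (z j).2) := by
  funext z
  unfold measd
  rw [applyU_tensor, norm_mul, mul_pow]

lemma sum_measd {k : ℕ} {𝒳 : Fin k → Type*} [∀ j, Fintype (𝒳 j)] [∀ j, DecidableEq (𝒳 j)]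
    (U : ∀ j, Matrix (𝒳 j) (𝒳 j) ℂ) (hU : ∀ j, U j ∈ Matrix.unitaryGroup (𝒳 j) ℂ)
    (ψ : (∀ j, 𝒳 j) → ℂ) :
    ∑ x, measd U ψ x = ∑ x, ‖ψ x‖ ^ 2 := by
  have innerU : ∀ y y' : ∀ j, 𝒳 j,
      ∑ x : ∀ j, 𝒳 j, (∏ j, U j (x j) (y j)) * (starRingEnd ℂ) (∏ j, U j (x j) (y' j))
        = if y' = y then 1 else 0 := by
    intro y y'
    have h1 : ∀ x : ∀ j, 𝒳 j, (∏ j, U j (x j) (y j)) * (starRingEnd ℂ) (∏ j, U j (x j) (y' j))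
        = ∏ j, (U j (x j) (y j) * (starRingEnd ℂ) (U j (x j) (y' j))) := by
      intro x
      rw [map_prod, ← Finset.prod_mul_distrib]
    rw [Finset.sum_congr rfl fun x _ => h1 x,
      ← Fintype.prod_sum (fun j a => U j a (y j) * (starRingEnd ℂ) (U j a (y' j)))]
    have h2 : ∀ j, (∑ a, U j a (y j) * (starRingEnd ℂ) (U j a (y' j)))
        = if y' j = y j then 1 else 0 := by
      intro j
      have hu := Matrix.mem_unitaryGroup_iff'.mp (hU j)
      calc ∑ a, U j a (y j) * (starRingEnd ℂ) (U j a (y' j))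
          = (star (U j) * U j) (y' j) (y j) := by
            rw [Matrix.mul_apply]
            refine Finset.sum_congr rfl fun a _ => ?_
            rw [Matrix.star_apply]
            ring_nf
            rfl
        _ = (1 : Matrix (𝒳 j) (𝒳 j) ℂ) (y' j) (y j) := by rw [hu]
        _ = if y' j = y j then 1 else 0 := Matrix.one_apply
    rw [Finset.prod_congr rfl fun j _ => h2 j]
    by_cases h : y' = y
    · subst h; simp
    · have hex : ∃ j, y' j ≠ y j := by
        by_contra hh
        push_neg at hh
        exact h (funext hh)
      obtain ⟨j0, hj0⟩ := hex
      rw [if_neg h]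
      exact Finset.prod_eq_zero (Finset.mem_univ j0) (by rw [if_neg hj0])
  have key : ∑ x, (applyU U ψ x * (starRingEnd ℂ) (applyU U ψ x))
      = ∑ y, ψ y * (starRingEnd ℂ) (ψ y) := by
    unfold applyU
    calc ∑ x : ∀ j, 𝒳 j, (∑ y, (∏ j, U j (x j) (y j)) * ψ y)
            * (starRingEnd ℂ) (∑ y, (∏ j, U j (x j) (y j)) * ψ y)
        = ∑ x : ∀ j, 𝒳 j, ∑ y, ∑ y', ((∏ j, U j (x j) (y j)) * ψ y)
            * ((starRingEnd ℂ) ((∏ j, U j (x j) (y' j)) * ψ y')) := by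
          refine Finset.sum_congr rfl fun x _ => ?_
          rw [map_sum, Finset.sum_mul_sum]
      _ = ∑ y, ∑ y', ∑ x : ∀ j, 𝒳 j, ((∏ j, U j (x j) (y j)) * ψ y)
            * ((starRingEnd ℂ) ((∏ j, U j (x j) (y' j)) * ψ y')) := by
          rw [Finset.sum_comm]
          exact Finset.sum_congr rfl fun y _ => Finset.sum_comm
      _ = ∑ y, ∑ y', (ψ y * (starRingEnd ℂ) (ψ y'))
            * ∑ x : ∀ j, 𝒳 j, ((∏ j, U j (x j) (y j))
              * (starRingEnd ℂ) (∏ j, U j (x j) (y' j))) := by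
          refine Finset.sum_congr rfl fun y _ => Finset.sum_congr rfl fun y' _ => ?_
          rw [Finset.mul_sum]
          refine Finset.sum_congr rfl fun x _ => ?_
          rw [map_mul]
          ring
      _ = ∑ y, ∑ y', (ψ y * (starRingEnd ℂ) (ψ y')) * (if y' = y then 1 else 0) := by
          refine Finset.sum_congr rfl fun y _ => Finset.sum_congr rfl fun y' _ => ?_
          rw [innerU]
      _ = ∑ y, ψ y * (starRingEnd ℂ) (ψ y) := by
          refine Finset.sum_congr rfl fun y _ => ?_
          have : ∀ y', (ψ y * (starRingEnd ℂ) (ψ y')) * (if y' = y then 1 else 0)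
              = if y' = y then ψ y * (starRingEnd ℂ) (ψ y') else 0 := by
            intro y'
            split_ifs <;> simp
          rw [Finset.sum_congr rfl fun y' _ => this y']
          simp
  have habs : ∀ w : ℂ, (‖w‖ : ℝ) ^ 2 = (w * (starRingEnd ℂ) w).re := by
    intro w
    rw [Complex.mul_conj, Complex.sq_norm]
    simp
  calc ∑ x, measd U ψ x
      = ∑ x, (applyU U ψ x * (starRingEnd ℂ) (applyU U ψ x)).re :=
        Finset.sum_congr rfl fun x _ => habs _
    _ = (∑ x, applyU U ψ x * (starRingEnd ℂ) (applyU U ψ x)).re := by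
        rw [Complex.re_sum]
    _ = (∑ y, ψ y * (starRingEnd ℂ) (ψ y)).re := by rw [key]
    _ = ∑ y, (ψ y * (starRingEnd ℂ) (ψ y)).re := by rw [Complex.re_sum]
    _ = ∑ y, ‖ψ y‖ ^ 2 := Finset.sum_congr rfl fun y _ => (habs _).symm

lemma Hat_measd_ge {k : ℕ} {𝒳 : Fin k → Type*} [∀ j, Fintype (𝒳 j)] [∀ j, DecidableEq (𝒳 j)]
    (α : ℝ) (θ : Fin k → ℝ) (hc : 0 ≤ α / (1 - α)) (hθ0 : ∀ j, 0 ≤ θ j)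
    (W : ∀ j, Matrix (𝒳 j) (𝒳 j) ℂ) (hW : ∀ j, W j ∈ Matrix.unitaryGroup (𝒳 j) ℂ)
    (ξ : (∀ j, 𝒳 j) → ℂ) (x₁ : ∀ j, 𝒳 j) (hξ : ξ x₁ ≠ 0) :
    α / (1 - α) * Real.logb 2
        ((∑ z, ‖ξ z‖ ^ 2) / (Fintype.card (∀ j, 𝒳 j)))
      ≤ Hat α θ (measd W ξ) := by
  haveI : Nonempty (∀ j, 𝒳 j) := ⟨x₁⟩
  set S := ∑ z, ‖ξ z‖ ^ 2 with hS
  have hSpos : 0 < S := Finset.sum_pos' (fun z _ => sq_nonneg _)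
    ⟨x₁, Finset.mem_univ _, pow_pos (norm_pos_iff.mpr hξ) 2⟩
  have hN : (0:ℝ) < Fintype.card (∀ j, 𝒳 j) := by exact_mod_cast Fintype.card_pos
  have hsum : ∑ z, measd W ξ z = S := sum_measd W hW ξ
  have hex : ∃ z, S / Fintype.card (∀ j, 𝒳 j) ≤ measd W ξ z := by
    by_contra h
    push_neg at h
    have hlt : ∑ z, measd W ξ z
        < ∑ _z : (∀ j, 𝒳 j), S / Fintype.card (∀ j, 𝒳 j) :=
      Finset.sum_lt_sum_of_nonempty Finset.univ_nonempty (fun z _ => h z)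
    rw [hsum, Finset.sum_const, Finset.card_univ, nsmul_eq_mul] at hlt
    have h2 : (Fintype.card (∀ j, 𝒳 j) : ℝ) * (S / Fintype.card (∀ j, 𝒳 j)) = S := by
      rw [mul_comm, div_mul_cancel₀ S (ne_of_gt hN)]
    linarith
  obtain ⟨z', hz'⟩ := hex
  have hz'pos : 0 < measd W ξ z' := lt_of_lt_of_le (div_pos hSpos hN) hz'
  have h1 := Hat_ge_delta α θ (measd W ξ) hc hθ0 (fun z => sq_nonneg _) z' hz'pos
  have h2 : Real.logb 2 (S / Fintype.card (∀ j, 𝒳 j)) ≤ Real.logb 2 (measd W ξ z') :=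
    Real.logb_le_logb_of_le one_lt_two (div_pos hSpos hN) hz'
  exact le_trans (mul_le_mul_of_nonneg_left h2 hc) h1

/-- subadditivity of `ρ^{α,θ}` under tensor products. -/
theorem stmt10 {k : ℕ} (hk : 1 ≤ k) (𝒳 𝒴 : Fin k → Type)
    [∀ i, Fintype (𝒳 i)] [∀ i, DecidableEq (𝒳 i)]
    [∀ i, Fintype (𝒴 i)] [∀ i, DecidableEq (𝒴 i)]
    (α : ℝ) (hα : α ∈ Set.Ioo (0 : ℝ) 1) (θ : Fin k → ℝ) (hθ : probVec θ)
    (ψ : (∀ i, 𝒳 i) → ℂ) (φ : (∀ i, 𝒴 i) → ℂ) (hψ : ψ ≠ 0) (hφ : φ ≠ 0) :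
    rhoAT α θ (tensorV ψ φ) ≤ rhoAT α θ ψ + rhoAT α θ φ := by
  classical
  obtain ⟨hα0, hα1⟩ := hα
  have hc : 0 ≤ α / (1 - α) := div_nonneg (le_of_lt hα0) (by linarith)
  obtain ⟨x₀, hx₀⟩ : ∃ x, ψ x ≠ 0 := by
    by_contra h
    push_neg at h
    exact hψ (funext h)
  obtain ⟨y₀, hy₀⟩ : ∃ y, φ y ≠ 0 := by
    by_contra h
    push_neg at h
    exact hφ (funext h)
  set z₀ : ∀ j, 𝒳 j × 𝒴 j := fun j => (x₀ j, y₀ j) with hz₀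
  have hξ : tensorV ψ φ z₀ ≠ 0 := mul_ne_zero hx₀ hy₀
  set A := { v : ℝ | ∃ U : ∀ j, Matrix (𝒳 j) (𝒳 j) ℂ,
    (∀ j, U j ∈ Matrix.unitaryGroup (𝒳 j) ℂ) ∧ v = Hat α θ (measd U ψ) } with hA
  set B := { v : ℝ | ∃ V : ∀ j, Matrix (𝒴 j) (𝒴 j) ℂ,
    (∀ j, V j ∈ Matrix.unitaryGroup (𝒴 j) ℂ) ∧ v = Hat α θ (measd V φ) } with hB
  set C := { v : ℝ | ∃ W : ∀ j, Matrix (𝒳 j × 𝒴 j) (𝒳 j × 𝒴 j) ℂ,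
    (∀ j, W j ∈ Matrix.unitaryGroup (𝒳 j × 𝒴 j) ℂ) ∧
    v = Hat α θ (measd W (tensorV ψ φ)) } with hC
  have hAne : A.Nonempty := ⟨_, fun _ => (1 : Matrix _ _ ℂ), fun j => one_mem _, rfl⟩
  have hBne : B.Nonempty := ⟨_, fun _ => (1 : Matrix _ _ ℂ), fun j => one_mem _, rfl⟩
  have hCbdd : BddBelow C := by
    refine ⟨α / (1 - α) * Real.logb 2
      ((∑ z, ‖tensorV ψ φ z‖ ^ 2) / (Fintype.card (∀ j, 𝒳 j × 𝒴 j))), ?_⟩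
    rintro v ⟨W, hW, rfl⟩
    exact Hat_measd_ge α θ hc hθ.1 W hW (tensorV ψ φ) z₀ hξ
  have hstep : ∀ a ∈ A, ∀ b ∈ B, rhoAT α θ (tensorV ψ φ) ≤ a + b := by
    rintro a ⟨U, hU, rfl⟩ b ⟨V, hV, rfl⟩
    have hP0 : ∀ x, 0 ≤ measd U ψ x := fun x => sq_nonneg _
    have hP'0 : ∀ y, 0 ≤ measd V φ y := fun y => sq_nonneg _
    have hPex : ∃ x, 0 < measd U ψ x := by
      by_contra h
      push_neg at h
      have hz : ∀ x, measd U ψ x = 0 := fun x => le_antisymm (h x) (hP0 x)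
      have h1 : ∑ x, measd U ψ x = 0 := Finset.sum_eq_zero fun x _ => hz x
      rw [sum_measd U hU ψ] at h1
      have h2 : (0:ℝ) < ∑ x, ‖ψ x‖ ^ 2 :=
        Finset.sum_pos' (fun x _ => sq_nonneg _)
          ⟨x₀, Finset.mem_univ _, pow_pos (norm_pos_iff.mpr hx₀) 2⟩
      linarith
    have hP'ex : ∃ y, 0 < measd V φ y := by
      by_contra h
      push_neg at h
      have hz : ∀ y, measd V φ y = 0 := fun y => le_antisymm (h y) (hP'0 y)
      have h1 : ∑ y, measd V φ y = 0 := Finset.sum_eq_zero fun y _ => hz y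
      rw [sum_measd V hV φ] at h1
      have h2 : (0:ℝ) < ∑ y, ‖φ y‖ ^ 2 :=
        Finset.sum_pos' (fun y _ => sq_nonneg _)
          ⟨y₀, Finset.mem_univ _, pow_pos (norm_pos_iff.mpr hy₀) 2⟩
      linarith
    have hmemC : Hat α θ (measd (kronU U V) (tensorV ψ φ)) ∈ C :=
      ⟨kronU U V, kronU_unitary hU hV, rfl⟩
    have hle : Hat α θ (measd (kronU U V) (tensorV ψ φ))
        ≤ Hat α θ (measd U ψ) + Hat α θ (measd V φ) := by
      rw [measd_tensor]
      exact Hat_prod_le α ⟨hα0, hα1⟩ θ hθ (measd U ψ) (measd V φ) hP0 hP'0 hPex hP'ex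
    exact le_trans (csInf_le hCbdd hmemC) hle
  have hrho : rhoAT α θ (tensorV ψ φ) = sInf C := rfl
  have hfin : sInf C - sInf B ≤ sInf A := by
    refine le_csInf hAne fun a ha => ?_
    rw [sub_le_iff_le_add']
    have h3 : sInf C - a ≤ sInf B := by
      refine le_csInf hBne fun b hb => ?_
      have h4 := hstep a ha b hb
      rw [hrho] at h4
      linarith
    linarith
  have e1 : rhoAT α θ ψ = sInf A := rfl
  have e2 : rhoAT α θ φ = sInf B := rfl
  rw [hrho, e1, e2]
  linarith
end
end

section
/- Let k ≥ 1 and 𝒳₁, …, 𝒳ₖ finite sets. The set of unit vectors with free support, namely F = {ψ ∈ ℂ^{𝒳₁×…×𝒳ₖ} : Σ_x |ψ(x)|² = 1 and there exist unitary matrices U_j ∈ U(ℂ^{𝒳_j}) such that supp((U₁⊗…⊗U_k)ψ) is free}, is a compact subset of ℂ^{𝒳₁×…×𝒳ₖ}. -/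
set_option synthInstance.maxHeartbeats 1000000
set_option maxHeartbeats 1000000

open Finset

noncomputable section

/-- A subset of a finite product is free if any two distinct elements differ in at
least two coordinates. -/
def FreeSet {k : ℕ} {𝒳 : Fin k → Type*} (Φ : Set (∀ j, 𝒳 j)) : Prop :=
  ∀ x ∈ Φ, ∀ y ∈ Φ, x ≠ y → 2 ≤ Set.ncard {j : Fin k | x j ≠ y j}

instance matrixFirstCountable {m n R : Type*} [Countable m] [Countable n]
    [TopologicalSpace R] [FirstCountableTopology R] :
    FirstCountableTopology (Matrix m n R) :=
  inferInstanceAs (FirstCountableTopology (m → n → R))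

lemma freeSet_mono {k : ℕ} {𝒳 : Fin k → Type*} {Φ Ψ : Set (∀ j, 𝒳 j)} (h : Φ ⊆ Ψ)
    (hΨ : FreeSet Ψ) : FreeSet Φ := fun x hx y hy hxy => hΨ x (h hx) y (h hy) hxy

/-- the set of unit vectors with free support is compact. -/
theorem stmt15 {k : ℕ} (hk : 1 ≤ k) (𝒳 : Fin k → Type)
    [∀ i, Fintype (𝒳 i)] [∀ i, DecidableEq (𝒳 i)] :
    IsCompact { ψ : (∀ j, 𝒳 j) → ℂ |
      (∑ x, ‖ψ x‖ ^ 2) = 1 ∧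
      ∃ U : ∀ j, Matrix (𝒳 j) (𝒳 j) ℂ,
        (∀ j, U j ∈ Matrix.unitaryGroup (𝒳 j) ℂ) ∧
        FreeSet {x | applyU U ψ x ≠ 0} } := by
  classical
  set E := (((∀ j, 𝒳 j) → ℂ) × (∀ j, Matrix (𝒳 j) (𝒳 j) ℂ)) with hE
  set K : Set E := {p | (∑ x, ‖p.1 x‖ ^ 2) = 1 ∧
      (∀ j, p.2 j ∈ Matrix.unitaryGroup (𝒳 j) ℂ) ∧
      FreeSet {x | applyU p.2 p.1 x ≠ 0}} with hKdef
  have himg : { ψ : (∀ j, 𝒳 j) → ℂ |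
      (∑ x, ‖ψ x‖ ^ 2) = 1 ∧
      ∃ U : ∀ j, Matrix (𝒳 j) (𝒳 j) ℂ,
        (∀ j, U j ∈ Matrix.unitaryGroup (𝒳 j) ℂ) ∧
        FreeSet {x | applyU U ψ x ≠ 0} } = Prod.fst '' K := by
    ext ψ
    constructor
    · rintro ⟨h1, U, hU, hf⟩
      exact ⟨(ψ, U), ⟨h1, hU, hf⟩, rfl⟩
    · rintro ⟨⟨ψ', U⟩, ⟨h1, hU, hf⟩, rfl⟩
      exact ⟨h1, U, hU, hf⟩
  rw [himg]
  -- ambient compact set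
  have hA : IsCompact {ψ : (∀ j, 𝒳 j) → ℂ | ∀ x, ‖ψ x‖ ≤ 1} := by
    have h1 : IsCompact (Set.univ.pi fun _ : ∀ j, 𝒳 j => Metric.closedBall (0 : ℂ) 1) :=
      isCompact_univ_pi fun _ => isCompact_closedBall _ _
    convert h1 using 1
    ext ψ
    simp [Set.mem_pi, mem_closedBall_zero_iff]
  have hB : ∀ j, IsCompact {M : Matrix (𝒳 j) (𝒳 j) ℂ | ∀ a b, ‖M a b‖ ≤ 1} := by
    intro j
    have h1 : IsCompact (Set.univ.pi fun _ : 𝒳 j =>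
        Set.univ.pi fun _ : 𝒳 j => Metric.closedBall (0 : ℂ) 1) :=
      isCompact_univ_pi fun _ => isCompact_univ_pi fun _ => isCompact_closedBall _ _
    refine (congrArg (@IsCompact (Matrix (𝒳 j) (𝒳 j) ℂ) _) ?_).mpr h1
    ext M
    constructor
    · intro h a _ b _
      simpa [mem_closedBall_zero_iff] using h a b
    · intro h a b
      simpa [mem_closedBall_zero_iff] using
        h a (Set.mem_univ a) b (Set.mem_univ b)
  have hC : IsCompact ({ψ : (∀ j, 𝒳 j) → ℂ | ∀ x, ‖ψ x‖ ≤ 1} ×ˢ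
      Set.univ.pi fun j => {M : Matrix (𝒳 j) (𝒳 j) ℂ | ∀ a b, ‖M a b‖ ≤ 1}) :=
    hA.prod (isCompact_univ_pi hB)
  -- continuity facts
  have hcont : ∀ x : ∀ j, 𝒳 j, Continuous fun p : E => applyU p.2 p.1 x := by
    intro x
    unfold applyU
    apply continuous_finset_sum
    intro y _
    exact (continuous_finset_prod _ fun j _ =>
      (((continuous_apply j).comp continuous_snd).matrix_elem (x j) (y j))).mul
      ((continuous_apply y).comp continuous_fst)
  have hnormcont : Continuous fun ψ : (∀ j, 𝒳 j) → ℂ => ∑ x, ‖ψ x‖ ^ 2 :=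
    continuous_finset_sum _ fun x _ =>
      ((continuous_norm.comp (continuous_apply x)).pow 2)
  -- K is closed
  have hKclosed : IsClosed K := by
    apply IsSeqClosed.isClosed
    intro p q hpK hpq
    have h1 : Filter.Tendsto (fun n => p n |>.1) Filter.atTop (nhds q.1) :=
      (continuous_fst.tendsto q).comp hpq
    have h2 : ∀ j, Filter.Tendsto (fun n => (p n).2 j) Filter.atTop (nhds (q.2 j)) :=
      fun j => (((continuous_apply j).comp continuous_snd).tendsto q).comp hpq
    refine ⟨?_, ?_, ?_⟩
    · have : Filter.Tendsto (fun n => ∑ x, ‖(p n).1 x‖ ^ 2)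
        Filter.atTop (nhds (∑ x, ‖q.1 x‖ ^ 2)) := (hnormcont.tendsto q.1).comp h1
      have h' : Filter.Tendsto (fun n => ∑ x, ‖(p n).1 x‖ ^ 2)
        Filter.atTop (nhds 1) := by
        simp only [fun n => (hpK n).1]
        exact tendsto_const_nhds
      exact tendsto_nhds_unique this h'
    · intro j
      have hcl : IsClosed {M : Matrix (𝒳 j) (𝒳 j) ℂ | M ∈ Matrix.unitaryGroup (𝒳 j) ℂ} := by
        have : {M : Matrix (𝒳 j) (𝒳 j) ℂ | M ∈ Matrix.unitaryGroup (𝒳 j) ℂ}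
            = (fun M : Matrix (𝒳 j) (𝒳 j) ℂ => M * star M) ⁻¹' {1} := by
          ext M
          simp [Matrix.mem_unitaryGroup_iff]
        rw [this]
        exact IsClosed.preimage
          (continuous_id.matrix_mul continuous_id.matrix_conjTranspose) isClosed_singleton
      exact hcl.mem_of_tendsto (h2 j) (Filter.Eventually.of_forall fun n => (hpK n).2.1 j)
    · -- freeness
      have hφ : ∀ x, Filter.Tendsto (fun n => applyU (p n).2 (p n).1 x)
          Filter.atTop (nhds (applyU q.2 q.1 x)) :=
        fun x => ((hcont x).tendsto q).comp hpq
      have hev : ∀ᶠ n in Filter.atTop, ∀ x : ∀ j, 𝒳 j,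
          applyU q.2 q.1 x ≠ 0 → applyU (p n).2 (p n).1 x ≠ 0 := by
        rw [Filter.eventually_all]
        intro x
        by_cases hx : applyU q.2 q.1 x ≠ 0
        · exact ((hφ x).eventually_ne hx).mono fun n hn _ => hn
        · exact Filter.Eventually.of_forall fun n h => absurd h hx
      obtain ⟨n, hn⟩ := hev.exists
      exact freeSet_mono (fun x hx => hn x hx) (hpK n).2.2
  -- K is contained in the ambient compact set
  have hKsub : K ⊆ ({ψ : (∀ j, 𝒳 j) → ℂ | ∀ x, ‖ψ x‖ ≤ 1} ×ˢ
      Set.univ.pi fun j => {M : Matrix (𝒳 j) (𝒳 j) ℂ | ∀ a b, ‖M a b‖ ≤ 1}) := by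
    rintro ⟨ψ, U⟩ ⟨h1, hU, -⟩
    dsimp only at h1 hU
    constructor
    · intro x
      have hle : ‖ψ x‖ ^ 2 ≤ 1 := by
        rw [← h1]
        exact single_le_sum (f := fun x => ‖ψ x‖ ^ 2)
          (fun i _ => by positivity) (mem_univ x)
      nlinarith [norm_nonneg (ψ x)]
    · intro j _
      intro a b
      have hU1 : (U j) * star (U j) = 1 := Matrix.mem_unitaryGroup_iff.mp (hU j)
      have hrow : ∑ c, Complex.normSq (U j a c) = 1 := by
        have := congrArg (fun M => M a a) hU1
        simp only [Matrix.mul_apply, Matrix.one_apply_eq, Matrix.star_apply] at this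
        have h2 : ∑ c, (Complex.normSq (U j a c) : ℂ) = 1 := by
          rw [← this]
          refine Finset.sum_congr rfl fun c _ => ?_
          rw [Complex.star_def, Complex.mul_conj]
        exact_mod_cast h2
      have hle : Complex.normSq (U j a b) ≤ 1 := by
        rw [← hrow]
        exact single_le_sum (fun i _ => Complex.normSq_nonneg _) (mem_univ b)
      rw [← Complex.sq_norm] at hle
      nlinarith [norm_nonneg (U j a b)]
  exact (hC.of_isClosed_subset hKclosed hKsub).image continuous_fst
end
end

section
/- Let k ≥ 1, α ∈ (0,1), θ ∈ Δ([k]), let 𝒳 be a finite set and P a probability distribution on 𝒳. Let P̃ be the measure on 𝒳 × … × 𝒳 (k factors) supported on the diagonal, defined by P̃(x,…,x) = P(x) and P̃ = 0 off the diagonal. Then H_{α,θ}(P̃) = H_α(P), the Rényi entropy of order α of P. -/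
open Finset

noncomputable section

namespace Stmt17Aux

lemma logb_le {x : ℝ} (hx : 0 < x) : Real.logb 2 x ≤ (x - 1) / Real.log 2 := by
  have h2 : (0:ℝ) < Real.log 2 := Real.log_pos (by norm_num)
  rw [Real.logb]
  gcongr
  exact Real.log_le_sub_one_of_pos hx

variable {X : Type} [Fintype X]

lemma Zpos {α : ℝ} {P : X → ℝ} (hP : probVec P) : 0 < ∑ c, P c ^ α := by
  obtain ⟨c, hc⟩ : ∃ c, P c ≠ 0 := by
    by_contra h
    push_neg at h
    have := hP.2
    simp [h] at this
  refine Finset.sum_pos' (fun i _ => Real.rpow_nonneg (hP.1 i) α) ⟨c, mem_univ c, ?_⟩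
  exact Real.rpow_pos_of_pos (lt_of_le_of_ne (hP.1 c) (Ne.symm hc)) α

/-- scalar upper bound -/
lemma scalar_ub {α : ℝ} (hα : α ∈ Set.Ioo (0:ℝ) 1)
    {P q : X → ℝ} (hP : probVec P) (hq : probVec q)
    (hsupp : ∀ c, P c = 0 → q c = 0) :
    shEnt q - α/(1-α) * klD q P ≤ renyiEnt α P := by
  obtain ⟨hα0, hα1⟩ := hα
  have h1α : (0:ℝ) < 1 - α := by linarith
  set Z := ∑ c, P c ^ α with hZ
  have hZpos : 0 < Z := Zpos hP
  have h2 : (0:ℝ) < Real.log 2 := Real.log_pos (by norm_num)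
  have key : shEnt q - α/(1-α) * klD q P
      = (1/(1-α)) * ∑ c, q c * Real.logb 2 (P c ^ α / q c) := by
    rw [shEnt, klD, Finset.mul_sum, Finset.mul_sum, ← Finset.sum_neg_distrib,
      ← Finset.sum_sub_distrib]
    refine Finset.sum_congr rfl fun c _ => ?_
    rcases eq_or_lt_of_le (hq.1 c) with h0 | hqc
    · simp [← h0]
    · have hPc : 0 < P c := by
        rcases eq_or_lt_of_le (hP.1 c) with h0 | h
        · exact absurd (hsupp c h0.symm) (ne_of_gt hqc)
        · exact h
      have hPa : (0:ℝ) < P c ^ α := Real.rpow_pos_of_pos hPc α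
      rw [Real.logb_div (ne_of_gt hPa) (ne_of_gt hqc),
        Real.logb_div (ne_of_gt hqc) (ne_of_gt hPc),
        Real.logb_rpow_eq_mul_logb_of_pos hPc]
      field_simp
      ring
  rw [key, renyiEnt]
  have hsum : ∑ c, q c * Real.logb 2 (P c ^ α / q c) ≤ Real.logb 2 Z := by
    have hpt : ∀ c, q c * Real.logb 2 (P c ^ α / q c)
        ≤ (P c ^ α / Z - q c) / Real.log 2 + q c * Real.logb 2 Z := by
      intro c
      rcases eq_or_lt_of_le (hq.1 c) with h0 | hqc
      · rw [← h0]
        simp only [zero_mul, sub_zero, mul_zero, add_zero]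
        have h3 : 0 ≤ P c ^ α / Z := div_nonneg (Real.rpow_nonneg (hP.1 c) α) hZpos.le
        positivity
      · have hPc : 0 < P c := by
          rcases eq_or_lt_of_le (hP.1 c) with h0 | h
          · exact absurd (hsupp c h0.symm) (ne_of_gt hqc)
          · exact h
        have hPa : (0:ℝ) < P c ^ α := Real.rpow_pos_of_pos hPc α
        have hx : (0:ℝ) < P c ^ α / (Z * q c) := by positivity
        have hsplit : Real.logb 2 (P c ^ α / q c)
            = Real.logb 2 (P c ^ α / (Z * q c)) + Real.logb 2 Z := by
          rw [← Real.logb_mul (ne_of_gt hx) (ne_of_gt hZpos)]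
          congr 1
          field_simp
        rw [hsplit, mul_add]
        gcongr
        calc q c * Real.logb 2 (P c ^ α / (Z * q c))
            ≤ q c * ((P c ^ α / (Z * q c) - 1) / Real.log 2) := by
              gcongr
              exact logb_le hx
          _ = (P c ^ α / Z - q c) / Real.log 2 := by
              field_simp
    calc ∑ c, q c * Real.logb 2 (P c ^ α / q c)
        ≤ ∑ c, ((P c ^ α / Z - q c) / Real.log 2 + q c * Real.logb 2 Z) :=
          Finset.sum_le_sum fun c _ => hpt c
      _ = ((∑ c, P c ^ α) / Z - ∑ c, q c) / Real.log 2
            + (∑ c, q c) * Real.logb 2 Z := by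
          rw [Finset.sum_add_distrib, ← Finset.sum_div, Finset.sum_sub_distrib,
            ← Finset.sum_div, ← Finset.sum_mul]
      _ = Real.logb 2 Z := by
          rw [hq.2, ← hZ, div_self (ne_of_gt hZpos)]
          simp
  have h1 : 0 < 1/(1-α) := by positivity
  gcongr

/-- the optimizing distribution -/
def optq (α : ℝ) (P : X → ℝ) : X → ℝ := fun c => P c ^ α / ∑ x, P x ^ α

lemma optq_probVec {α : ℝ} {P : X → ℝ} (hP : probVec P) : probVec (optq α P) := by
  have hZ := Zpos (α := α) hP
  constructor
  · intro c
    exact div_nonneg (Real.rpow_nonneg (hP.1 c) α) hZ.le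
  · show ∑ c, P c ^ α / (∑ x, P x ^ α) = 1
    rw [← Finset.sum_div, div_self (ne_of_gt hZ)]

lemma optq_supp {α : ℝ} (hα0 : 0 < α) {P : X → ℝ} (c : X) (h : P c = 0) :
    optq α P c = 0 := by
  simp [optq, h, Real.zero_rpow (ne_of_gt hα0)]

lemma optq_val {α : ℝ} (hα : α ∈ Set.Ioo (0:ℝ) 1) {P : X → ℝ} (hP : probVec P) :
    shEnt (optq α P) - α/(1-α) * klD (optq α P) P = renyiEnt α P := by
  obtain ⟨hα0, hα1⟩ := hα
  have h1α : (1:ℝ) - α ≠ 0 := by intro h; linarith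
  set Z := ∑ c : X, P c ^ α with hZdef
  have hZ : 0 < Z := Zpos hP
  have hq1 : ∑ c, optq α P c = 1 := (optq_probVec hP).2
  set T := ∑ c, optq α P c * Real.logb 2 (P c) with hT
  have hsh : shEnt (optq α P) = Real.logb 2 Z - α * T := by
    rw [shEnt, hT, Finset.mul_sum, ← Finset.sum_neg_distrib]
    have : ∀ c ∈ univ, -(optq α P c * Real.logb 2 (optq α P c))
        = optq α P c * Real.logb 2 Z - α * (optq α P c * Real.logb 2 (P c)) := by
      intro c _
      rcases eq_or_lt_of_le (hP.1 c) with h0 | hPc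
      · simp [optq_supp hα0 c h0.symm]
      · have hPa : (0:ℝ) < P c ^ α := Real.rpow_pos_of_pos hPc α
        rw [show optq α P c = P c ^ α / Z from rfl,
          Real.logb_div (ne_of_gt hPa) (ne_of_gt hZ),
          Real.logb_rpow_eq_mul_logb_of_pos hPc]
        ring
    rw [Finset.sum_congr rfl this, Finset.sum_sub_distrib, ← Finset.sum_mul, hq1]
    ring
  have hkl : klD (optq α P) P = (α - 1) * T - Real.logb 2 Z := by
    rw [klD, hT, Finset.mul_sum]
    have : ∀ c ∈ univ, optq α P c * Real.logb 2 (optq α P c / P c)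
        = (α - 1) * (optq α P c * Real.logb 2 (P c)) - optq α P c * Real.logb 2 Z := by
      intro c _
      rcases eq_or_lt_of_le (hP.1 c) with h0 | hPc
      · simp [optq_supp hα0 c h0.symm]
      · have hPa : (0:ℝ) < P c ^ α := Real.rpow_pos_of_pos hPc α
        have hqc : 0 < optq α P c := div_pos hPa hZ
        rw [Real.logb_div (ne_of_gt hqc) (ne_of_gt hPc),
          show optq α P c = P c ^ α / Z from rfl,
          Real.logb_div (ne_of_gt hPa) (ne_of_gt hZ),
          Real.logb_rpow_eq_mul_logb_of_pos hPc]
        ring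
    rw [Finset.sum_congr rfl this, Finset.sum_sub_distrib, ← Finset.sum_mul, hq1]
    ring
  rw [hsh, hkl, renyiEnt, ← hZdef]
  field_simp
  ring

variable [DecidableEq X]

lemma diagSum {k : ℕ} (hk : 1 ≤ k)
    (F : (Fin k → X) → ℝ) (hF : ∀ x, (¬ ∃ c, ∀ i, x i = c) → F x = 0) :
    ∑ x, F x = ∑ c, F (fun _ => c) := by
  classical
  have hinj : ∀ a ∈ (univ : Finset X), ∀ b ∈ (univ : Finset X),
      (fun c : X => (fun _ : Fin k => c)) a = (fun c : X => (fun _ : Fin k => c)) b → a = b := by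
    intro a _ b _ h
    exact congrFun h ⟨0, hk⟩
  have himg : ∑ c, F (fun _ => c)
      = ∑ x ∈ Finset.image (fun c : X => (fun _ : Fin k => c)) univ, F x :=
    (Finset.sum_image hinj).symm
  rw [himg]
  symm
  apply Finset.sum_subset (Finset.subset_univ _)
  intro x _ hx
  apply hF
  rintro ⟨c, hc⟩
  exact hx (Finset.mem_image.mpr ⟨c, mem_univ c, by funext i; exact (hc i).symm⟩)

lemma reduceVal {k : ℕ} (hk : 1 ≤ k)
    (θ : Fin k → ℝ) (hθ1 : ∑ j, θ j = 1)
    (P : X → ℝ) (Pt : (Fin k → X) → ℝ) (hPtdiag : ∀ c, Pt (fun _ => c) = P c)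
    (Q : (Fin k → X) → ℝ) (hQoff : ∀ x, (¬ ∃ c, ∀ i, x i = c) → Q x = 0) (r : ℝ) :
    (∑ j, θ j * shEnt (marg Q j)) - r * klD Q Pt
      = shEnt (fun c => Q (fun _ => c)) - r * klD (fun c => Q (fun _ => c)) P := by
  have hmarg : ∀ j : Fin k, marg Q j = fun c => Q (fun _ => c) := by
    intro j
    funext a
    show (∑ x, if x j = a then Q x else 0) = Q (fun _ => a)
    rw [diagSum hk _ (fun x hx => by by_cases h : x j = a <;> simp [h, hQoff x hx])]
    simp
  have h1 : ∑ j, θ j * shEnt (marg Q j) = shEnt (fun c => Q (fun _ => c)) := by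
    simp only [hmarg]
    rw [← Finset.sum_mul, hθ1, one_mul]
  have h2 : klD Q Pt = klD (fun c => Q (fun _ => c)) P := by
    rw [klD, klD]
    rw [diagSum hk _ (fun x hx => by simp [hQoff x hx])]
    exact Finset.sum_congr rfl fun c _ => by rw [hPtdiag]
  rw [h1, h2]

end Stmt17Aux

open Stmt17Aux in
/-- for the diagonal measure `P̃` on `𝒳 × … × 𝒳` (k factors) induced by
a probability distribution `P` on `𝒳` (the measured GHZ-type distribution),
`H_{α,θ}(P̃) = H_α(P)` for every `α ∈ (0,1)` and every `θ ∈ Δ([k])`.  The diagonal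
measure is characterised by `P̃(x,…,x) = P(x)` and `P̃ = 0` off the diagonal. -/
theorem stmt17 {k : ℕ} (hk : 1 ≤ k) (𝒳 : Type) [Fintype 𝒳] [DecidableEq 𝒳]
    (α : ℝ) (hα : α ∈ Set.Ioo (0 : ℝ) 1) (θ : Fin k → ℝ) (hθ : probVec θ)
    (P : 𝒳 → ℝ) (hP : probVec P)
    (Pt : (Fin k → 𝒳) → ℝ)
    (hPtdiag : ∀ c : 𝒳, Pt (fun _ => c) = P c)
    (hPtoff : ∀ x : Fin k → 𝒳, (¬ ∃ c : 𝒳, ∀ i, x i = c) → Pt x = 0) :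
    Hat (𝒳 := fun _ : Fin k => 𝒳) α θ Pt = renyiEnt α P := by
  classical
  rw [Hat]
  apply IsGreatest.csSup_eq
  constructor
  · -- membership : the diagonal lift of optq achieves the value
    set Qs : (Fin k → 𝒳) → ℝ :=
      fun x => if ∀ i, x i = x ⟨0, hk⟩ then optq α P (x ⟨0, hk⟩) else 0 with hQs
    have hQdiag : ∀ c : 𝒳, Qs (fun _ => c) = optq α P c := by
      intro c
      simp [hQs]
    have hQoff : ∀ x, (¬ ∃ c, ∀ i, x i = c) → Qs x = 0 := by
      intro x hx
      rw [hQs]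
      simp only
      rw [if_neg]
      intro h
      exact hx ⟨x ⟨0, hk⟩, h⟩
    have hsum : ∑ x, Qs x = 1 := by
      rw [diagSum hk Qs hQoff]
      calc ∑ c, Qs (fun _ => c) = ∑ c, optq α P c :=
            Finset.sum_congr rfl fun c _ => hQdiag c
        _ = 1 := (optq_probVec hP).2
    refine ⟨Qs, ⟨fun x => ?_, hsum⟩, ?_, ?_⟩
    · rw [hQs]
      simp only
      split
      · exact (optq_probVec hP).1 _
      · exact le_refl 0
    · intro x hx0
      by_cases hx : ∃ c, ∀ i, x i = c
      · obtain ⟨c, hc⟩ := hx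
        have hxe : x = fun _ => c := funext hc
        subst hxe
        rw [hQdiag]
        rw [hPtdiag] at hx0
        exact optq_supp hα.1 c hx0
      · exact hQoff x hx
    · rw [reduceVal hk θ hθ.2 P Pt hPtdiag Qs hQoff]
      have hqe : (fun c => Qs (fun _ => c)) = optq α P := funext hQdiag
      rw [hqe, optq_val hα hP]
  · -- upper bound
    rintro v ⟨Q, hQpv, hQsupp, rfl⟩
    have hQoff : ∀ x, (¬ ∃ c, ∀ i, x i = c) → Q x = 0 :=
      fun x hx => hQsupp x (hPtoff x hx)
    rw [reduceVal hk θ hθ.2 P Pt hPtdiag Q hQoff]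
    apply scalar_ub hα hP
    · constructor
      · intro c
        exact hQpv.1 _
      · rw [← diagSum hk Q hQoff]
        exact hQpv.2
    · intro c hc
      exact hQsupp _ (by rw [hPtdiag]; exact hc)
end
end

section
/- Let k ≥ 1, let M be a probability distribution on a product 𝒳₁ × … × 𝒳ₖ of finite sets, and let r ≥ 0. Then the infimum over t ∈ [0,∞) and θ ∈ Δ([k]) of max_{P ∈ Δ(supp M)} [ r·t + Σ_{j=1}^k θ(j) H(P_j) − t·D(P‖M) ] equals the maximum over P ∈ Δ(supp M) with D(P‖M) ≤ r of min_{j∈[k]} H(P_j); the latter maximum is attained since M itself satisfies D(M‖M) = 0 ≤ r. -/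
open Finset

noncomputable section

open Pointwise

lemma aux_log2_pos : (0:ℝ) < Real.log 2 := Real.log_pos (by norm_num)

lemma aux_mul_log_ge {x : ℝ} (hx : 0 ≤ x) : x - 1 ≤ x * Real.log x := by
  rcases eq_or_lt_of_le hx with h | h
  · simp [← h]
  · have h1 : Real.log x⁻¹ ≤ x⁻¹ - 1 := Real.log_le_sub_one_of_pos (inv_pos.2 h)
    rw [Real.log_inv] at h1
    have h2 : 1 - x⁻¹ ≤ Real.log x := by linarith
    have := mul_le_mul_of_nonneg_left h2 hx
    calc x - 1 = x * (1 - x⁻¹) := by field_simp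
    _ ≤ x * Real.log x := this

lemma aux_mul_logb_nonpos {q : ℝ} (h0 : 0 ≤ q) (h1 : q ≤ 1) : q * Real.logb 2 q ≤ 0 := by
  have : Real.logb 2 q ≤ 0 := Real.logb_nonpos (by norm_num) h0 h1
  exact mul_nonpos_of_nonneg_of_nonpos h0 this

lemma aux_mul_logb_ge {q : ℝ} (h0 : 0 ≤ q) : (q - 1) / Real.log 2 ≤ q * Real.logb 2 q := by
  rw [Real.logb, mul_div_assoc']
  exact div_le_div_of_nonneg_right (aux_mul_log_ge h0) aux_log2_pos.le

lemma shEnt_nonneg_of {X : Type*} [Fintype X] {Q : X → ℝ} (hQ : ∀ x, 0 ≤ Q x ∧ Q x ≤ 1) :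
    0 ≤ shEnt Q := by
  rw [shEnt, neg_nonneg]
  exact Finset.sum_nonpos fun x _ => aux_mul_logb_nonpos (hQ x).1 (hQ x).2

lemma shEnt_le_of {X : Type*} [Fintype X] {Q : X → ℝ} (hQ : ∀ x, 0 ≤ Q x) :
    shEnt Q ≤ (Fintype.card X : ℝ) / Real.log 2 := by
  rw [shEnt]
  have : ∀ x ∈ Finset.univ, -(Q x * Real.logb 2 (Q x)) ≤ 1 / Real.log 2 := by
    intro x _
    have := aux_mul_logb_ge (hQ x)
    have h2 : (Q x - 1)/Real.log 2 ≥ (0-1)/Real.log 2 :=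
      div_le_div_of_nonneg_right (by linarith [hQ x]) aux_log2_pos.le
    have : -(Q x * Real.logb 2 (Q x)) ≤ -((0-1)/Real.log 2) := by
      have := le_trans h2 (aux_mul_logb_ge (hQ x))
      linarith
    calc -(Q x * Real.logb 2 (Q x)) ≤ -((0-1)/Real.log 2) := this
    _ = 1 / Real.log 2 := by ring
  calc -∑ x, Q x * Real.logb 2 (Q x) = ∑ x, -(Q x * Real.logb 2 (Q x)) := by
        rw [Finset.sum_neg_distrib]
  _ ≤ ∑ _x : X, 1 / Real.log 2 := Finset.sum_le_sum this
  _ = (Fintype.card X : ℝ) / Real.log 2 := by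
        rw [Finset.sum_const, Finset.card_univ, nsmul_eq_mul]; ring

lemma klD_self {X : Type*} [Fintype X] (M : X → ℝ) : klD M M = 0 := by
  rw [klD]
  apply Finset.sum_eq_zero
  intro x _
  rcases eq_or_ne (M x) 0 with h | h
  · simp [h]
  · rw [div_self h]; simp

lemma klD_eq_G {X : Type*} [Fintype X] {P M : X → ℝ} (hsupp : ∀ x, M x = 0 → P x = 0) :
    klD P M = ∑ x, (P x * Real.logb 2 (P x) - P x * Real.logb 2 (M x)) := by
  apply Finset.sum_congr rfl
  intro x _
  rcases eq_or_ne (P x) 0 with h | h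
  · simp [h]
  · have hMx : M x ≠ 0 := fun hm => h (hsupp x hm)
    rw [Real.logb_div h hMx]; ring

lemma klD_ge {X : Type*} [Fintype X] {P M : X → ℝ} (hP : ∀ x, 0 ≤ P x)
    (hM0 : ∀ x, 0 ≤ M x) (hM1 : ∀ x, M x ≤ 1) (hsupp : ∀ x, M x = 0 → P x = 0) :
    -(Fintype.card X : ℝ) / Real.log 2 ≤ klD P M := by
  rw [klD_eq_G hsupp]
  have key : ∀ x ∈ Finset.univ, -(1:ℝ)/Real.log 2 ≤ P x * Real.logb 2 (P x) - P x * Real.logb 2 (M x) := by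
    intro x _
    have h1 : (P x - 1)/Real.log 2 ≤ P x * Real.logb 2 (P x) := aux_mul_logb_ge (hP x)
    have hlogM : Real.logb 2 (M x) ≤ 0 := Real.logb_nonpos (by norm_num) (hM0 x) (hM1 x)
    have h2 : P x * Real.logb 2 (M x) ≤ 0 := mul_nonpos_of_nonneg_of_nonpos (hP x) hlogM
    have h3 : -(1:ℝ)/Real.log 2 ≤ (P x - 1)/Real.log 2 :=
      div_le_div_of_nonneg_right (by linarith [hP x]) aux_log2_pos.le
    linarith
  calc -(Fintype.card X : ℝ) / Real.log 2 = ∑ _x : X, -(1:ℝ)/Real.log 2 := by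
        rw [Finset.sum_const, Finset.card_univ, nsmul_eq_mul]; ring
  _ ≤ _ := Finset.sum_le_sum key

lemma convexOn_finset_sum {E : Type*} [AddCommGroup E] [Module ℝ E] {s : Set E} (hs : Convex ℝ s)
    {ι : Type*} (t : Finset ι) (f : ι → E → ℝ) (hf : ∀ i ∈ t, ConvexOn ℝ s (f i)) :
    ConvexOn ℝ s (fun x => ∑ i ∈ t, f i x) := by
  classical
  induction t using Finset.induction_on with
  | empty => simpa using convexOn_const 0 hs
  | insert _ _ hnotmem ih =>
    rename_i a t
    simp only [Finset.sum_insert hnotmem]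
    exact (hf a (Finset.mem_insert_self a t)).add
      (ih fun i hi => hf i (Finset.mem_insert_of_mem hi))

lemma continuous_finset_inf' {ι E : Type*} [TopologicalSpace E] (s : Finset ι) (hs : s.Nonempty)
    {f : ι → E → ℝ} (hf : ∀ i, Continuous (f i)) :
    Continuous fun x => s.inf' hs fun i => f i x := by
  classical
  induction hs using Finset.Nonempty.cons_induction with
  | singleton a =>
    exact (continuous_congr (fun x => Finset.inf'_singleton (fun i => f i x))).mpr (hf a)
  | cons a t hat ht ih =>
    have : (fun x => (Finset.cons a t hat).inf' (Finset.cons_nonempty hat) fun i => f i x)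
        = fun x => min (f a x) (t.inf' ht fun i => f i x) := by
      funext x; rw [Finset.inf'_cons]
    rw [this]
    exact (hf a).min ih

section prod
variable {k : ℕ} {𝒳 : Fin k → Type*} [∀ j, Fintype (𝒳 j)] [∀ j, DecidableEq (𝒳 j)]

lemma marg_nonneg_s19 {P : (∀ i, 𝒳 i) → ℝ} (hP : ∀ x, 0 ≤ P x) (j : Fin k) (a : 𝒳 j) :
    0 ≤ marg P j a :=
  Finset.sum_nonneg fun x _ => by split <;> simp [hP x]

lemma sum_marg (P : (∀ i, 𝒳 i) → ℝ) (j : Fin k) : ∑ a, marg P j a = ∑ x, P x := by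
  simp only [marg]; rw [Finset.sum_comm]
  apply Finset.sum_congr rfl
  intro x _
  rw [Finset.sum_ite_eq (Finset.univ) (x j) (fun _ => P x)]
  simp

lemma marg_le_one {P : (∀ i, 𝒳 i) → ℝ} (hP : probVec P) (j : Fin k) (a : 𝒳 j) :
    marg P j a ≤ 1 := by
  have h := sum_marg P j
  rw [hP.2] at h
  rw [← h]
  exact Finset.single_le_sum (fun b _ => marg_nonneg_s19 hP.1 j b) (Finset.mem_univ a)

/-- marginal evaluation as a linear map -/
def margLin (j : Fin k) (a : 𝒳 j) : ((∀ i, 𝒳 i) → ℝ) →ₗ[ℝ] ℝ where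
  toFun P := marg P j a
  map_add' P Q := by
    simp only [marg, Pi.add_apply]
    rw [← Finset.sum_add_distrib]
    apply Finset.sum_congr rfl
    intro x _; split <;> simp
  map_smul' c P := by
    simp only [marg, Pi.smul_apply, smul_eq_mul, RingHom.id_apply]
    rw [Finset.mul_sum]
    apply Finset.sum_congr rfl
    intro x _; split <;> simp

lemma continuous_marg (j : Fin k) (a : 𝒳 j) : Continuous fun P : (∀ i, 𝒳 i) → ℝ => marg P j a := by
  apply continuous_finset_sum
  intro x _
  by_cases h : x j = a
  · simpa [h] using continuous_apply x
  · simpa [h] using (continuous_const : Continuous fun _ : (∀ i, 𝒳 i) → ℝ => (0:ℝ))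

lemma shEnt_eq_sum_negMulLog {X : Type*} [Fintype X] (Q : X → ℝ) :
    shEnt Q = (1 / Real.log 2) * ∑ x, Real.negMulLog (Q x) := by
  rw [shEnt, Finset.mul_sum, ← Finset.sum_neg_distrib]
  apply Finset.sum_congr rfl
  intro x _
  rw [Real.negMulLog, Real.logb]
  ring

lemma continuous_shEnt_marg (j : Fin k) :
    Continuous fun P : (∀ i, 𝒳 i) → ℝ => shEnt (marg P j) := by
  have : (fun P : (∀ i, 𝒳 i) → ℝ => shEnt (marg P j)) =
      fun P => (1 / Real.log 2) * ∑ a, Real.negMulLog (marg P j a) := by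
    funext P; exact shEnt_eq_sum_negMulLog _
  rw [this]
  exact continuous_const.mul (continuous_finset_sum _ fun a _ =>
    Real.continuous_negMulLog.comp (continuous_marg j a))

lemma concaveOn_shEnt_marg (j : Fin k) :
    ConcaveOn ℝ {P : (∀ i, 𝒳 i) → ℝ | ∀ x, 0 ≤ P x} (fun P => shEnt (marg P j)) := by
  have hconv : Convex ℝ {P : (∀ i, 𝒳 i) → ℝ | ∀ x, 0 ≤ P x} := by
    intro P hP Q hQ a b ha hb _
    intro x
    have : 0 ≤ a * P x + b * Q x := add_nonneg (mul_nonneg ha (hP x)) (mul_nonneg hb (hQ x))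
    simpa using this
  have hconvsum : ConvexOn ℝ {P : (∀ i, 𝒳 i) → ℝ | ∀ x, 0 ≤ P x}
      (fun P => ∑ a, -Real.negMulLog (marg P j a)) := by
    apply convexOn_finset_sum hconv
    intro a _
    have hcomp : ConcaveOn ℝ ((margLin j a).toAffineMap ⁻¹' (Set.Ici (0:ℝ)))
        (Real.negMulLog ∘ (margLin j a).toAffineMap) :=
      Real.concaveOn_negMulLog.comp_affineMap (margLin j a).toAffineMap
    have hsub : ConcaveOn ℝ {P : (∀ i, 𝒳 i) → ℝ | ∀ x, 0 ≤ P x}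
        (Real.negMulLog ∘ (margLin j a).toAffineMap) :=
      hcomp.subset (fun P hP => marg_nonneg_s19 hP j a) hconv
    have h2 := hsub.neg
    have heq : (fun P : (∀ i, 𝒳 i) → ℝ => -Real.negMulLog (marg P j a)) =
        -(Real.negMulLog ∘ (margLin j a).toAffineMap) := by
      funext P; rfl
    rw [heq]; exact h2
  have hsum : ConcaveOn ℝ {P : (∀ i, 𝒳 i) → ℝ | ∀ x, 0 ≤ P x}
      (fun P => ∑ a, Real.negMulLog (marg P j a)) := by
    have heq : (fun P : (∀ i, 𝒳 i) → ℝ => ∑ a, Real.negMulLog (marg P j a)) =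
        -(fun P => ∑ a, -Real.negMulLog (marg P j a)) := by
      funext P; simp
    rw [heq]; exact hconvsum.neg
  have heq2 : (fun P : (∀ i, 𝒳 i) → ℝ => shEnt (marg P j)) =
      fun P => (1 / Real.log 2) • ∑ a, Real.negMulLog (marg P j a) := by
    funext P; rw [smul_eq_mul]; exact shEnt_eq_sum_negMulLog _
  rw [heq2]
  exact hsum.smul (le_of_lt (one_div_pos.mpr (Real.log_pos (by norm_num))))

end prod

section gconv
variable {X : Type*} [Fintype X] [DecidableEq X]

lemma convexOn_linear_eval {s : Set (X → ℝ)} (hs : Convex ℝ s) (c : ℝ) (x : X) :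
    ConvexOn ℝ s (fun P => c * P x) := by
  refine ⟨hs, ?_⟩
  intro P _ Q _ a b _ _ _
  simp only [Pi.add_apply, Pi.smul_apply, smul_eq_mul]
  apply le_of_eq; ring

lemma convexOn_G (M : X → ℝ) :
    ConvexOn ℝ {P : X → ℝ | ∀ x, 0 ≤ P x}
      (fun P => ∑ x, (P x * Real.logb 2 (P x) - P x * Real.logb 2 (M x))) := by
  have hconv : Convex ℝ {P : X → ℝ | ∀ x, 0 ≤ P x} := by
    intro P hP Q hQ a b ha hb _
    intro x
    have : 0 ≤ a * P x + b * Q x := add_nonneg (mul_nonneg ha (hP x)) (mul_nonneg hb (hQ x))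
    simpa using this
  apply convexOn_finset_sum hconv
  intro x _
  have h1 : ConvexOn ℝ {P : X → ℝ | ∀ x, 0 ≤ P x} (fun P => P x * Real.logb 2 (P x)) := by
    have hcomp : ConvexOn ℝ ((LinearMap.proj x : (X → ℝ) →ₗ[ℝ] ℝ).toAffineMap ⁻¹' (Set.Ici (0:ℝ)))
        ((fun y => y * Real.log y) ∘ (LinearMap.proj x : (X → ℝ) →ₗ[ℝ] ℝ).toAffineMap) :=
      Real.convexOn_mul_log.comp_affineMap _
    have hsub : ConvexOn ℝ {P : X → ℝ | ∀ x, 0 ≤ P x}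
        ((fun y => y * Real.log y) ∘ (LinearMap.proj x : (X → ℝ) →ₗ[ℝ] ℝ).toAffineMap) :=
      hcomp.subset (fun P hP => hP x) hconv
    have := hsub.smul (le_of_lt (one_div_pos.mpr (Real.log_pos (by norm_num : (1:ℝ) < 2))))
    have heq : (fun P : X → ℝ => P x * Real.logb 2 (P x)) =
        (fun P => (1 / Real.log 2) • (((fun y => y * Real.log y) ∘
          (LinearMap.proj x : (X → ℝ) →ₗ[ℝ] ℝ).toAffineMap) P)) := by
      funext P
      simp only [Function.comp_apply, smul_eq_mul, Real.logb]
      show P x * (Real.log (P x) / Real.log 2) = 1 / Real.log 2 * (P x * Real.log (P x))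
      ring
    rw [heq]; exact this
  have h2 : ConvexOn ℝ {P : X → ℝ | ∀ x, 0 ≤ P x}
      (fun P => -Real.logb 2 (M x) * P x) := convexOn_linear_eval hconv _ x
  have := h1.add h2
  have heq : (fun P : X → ℝ => P x * Real.logb 2 (P x) - P x * Real.logb 2 (M x)) =
      ((fun P : X → ℝ => P x * Real.logb 2 (P x)) + fun P => -Real.logb 2 (M x) * P x) := by
    funext P; simp [Pi.add_apply]; ring
  rw [heq]; exact this

lemma isClosed_suppSet (M : X → ℝ) : IsClosed {P : X → ℝ | ∀ x, M x = 0 → P x = 0} := by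
  have h : {P : X → ℝ | ∀ x, M x = 0 → P x = 0} = ⋂ x, {P : X → ℝ | M x = 0 → P x = 0} := by
    ext P; simp [Set.mem_iInter]
  rw [h]
  refine isClosed_iInter fun x => ?_
  by_cases hx : M x = 0
  · have : {P : X → ℝ | M x = 0 → P x = 0} = {P : X → ℝ | P x = 0} := by
      ext P; simp [hx]
    rw [this]
    exact isClosed_eq (continuous_apply x) continuous_const
  · have : {P : X → ℝ | M x = 0 → P x = 0} = Set.univ := by
      ext P; simp [hx]
    rw [this]; exact isClosed_univ

lemma isCompact_probSet (M : X → ℝ) :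
    IsCompact {P : X → ℝ | probVec P ∧ ∀ x, M x = 0 → P x = 0} := by
  have h : {P : X → ℝ | probVec P ∧ ∀ x, M x = 0 → P x = 0} =
      stdSimplex ℝ X ∩ {P : X → ℝ | ∀ x, M x = 0 → P x = 0} := by
    ext P
    constructor
    · rintro ⟨⟨h0, h1⟩, h2⟩
      exact ⟨⟨h0, h1⟩, h2⟩
    · rintro ⟨⟨h0, h1⟩, h2⟩
      exact ⟨⟨h0, h1⟩, h2⟩
  rw [h]
  exact (isCompact_stdSimplex ℝ X).inter_right (isClosed_suppSet M)

lemma convex_probSet (M : X → ℝ) :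
    Convex ℝ {P : X → ℝ | probVec P ∧ ∀ x, M x = 0 → P x = 0} := by
  intro P hP Q hQ a b ha hb hab
  obtain ⟨⟨hP0, hP1⟩, hPs⟩ := hP
  obtain ⟨⟨hQ0, hQ1⟩, hQs⟩ := hQ
  refine ⟨⟨fun x => ?_, ?_⟩, fun x hx => ?_⟩
  · have : 0 ≤ a * P x + b * Q x := add_nonneg (mul_nonneg ha (hP0 x)) (mul_nonneg hb (hQ0 x))
    simpa using this
  · have : ∑ x, (a * P x + b * Q x) = 1 := by
      rw [Finset.sum_add_distrib, ← Finset.mul_sum, ← Finset.mul_sum, hP1, hQ1]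
      simpa using hab
    simpa using this
  · have h1 := hPs x hx
    have h2 := hQs x hx
    simp [h1, h2]
end gconv


/-- the infimum over `t ∈ [0,∞)` and `θ ∈ Δ([k])` of
`max_P [rt + Σ_j θ(j) H(P_j) − t·D(P‖M)]` equals
`max { min_j H(P_j) : P ∈ Δ(supp M), D(P‖M) ≤ r }`, and the latter maximum is
attained. -/
theorem stmt19 {k : ℕ} (hk : 1 ≤ k) (𝒳 : Fin k → Type)
    [∀ i, Fintype (𝒳 i)] [∀ i, DecidableEq (𝒳 i)]
    (M : (∀ i, 𝒳 i) → ℝ) (hM : probVec M) (r : ℝ) (hr : 0 ≤ r) :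
    sInf { v : ℝ | ∃ t : ℝ, 0 ≤ t ∧ ∃ θ : Fin k → ℝ, probVec θ ∧
        v = sSup { w : ℝ | ∃ P : (∀ i, 𝒳 i) → ℝ, probVec P ∧
          (∀ x, M x = 0 → P x = 0) ∧
          w = r * t + (∑ j, θ j * shEnt (marg P j)) - t * klD P M } } =
      sSup { w : ℝ | ∃ P : (∀ i, 𝒳 i) → ℝ, probVec P ∧ (∀ x, M x = 0 → P x = 0) ∧
        klD P M ≤ r ∧ w = ⨅ j : Fin k, shEnt (marg P j) } ∧
    ∃ P : (∀ i, 𝒳 i) → ℝ, probVec P ∧ (∀ x, M x = 0 → P x = 0) ∧ klD P M ≤ r ∧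
      (⨅ j : Fin k, shEnt (marg P j)) =
        sSup { w : ℝ | ∃ P : (∀ i, 𝒳 i) → ℝ, probVec P ∧ (∀ x, M x = 0 → P x = 0) ∧
          klD P M ≤ r ∧ w = ⨅ j : Fin k, shEnt (marg P j) } := by
  classical
  haveI hkne : Nonempty (Fin k) := ⟨⟨0, hk⟩⟩
  obtain ⟨hM0, hM1⟩ := hM
  have hMle1 : ∀ x, M x ≤ 1 := by
    intro x
    rw [← hM1]
    exact Finset.single_le_sum (fun y _ => hM0 y) (Finset.mem_univ x)
  set Gf : ((∀ i, 𝒳 i) → ℝ) → ℝ :=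
    fun P => ∑ x, (P x * Real.logb 2 (P x) - P x * Real.logb 2 (M x)) with hGf_def
  have hGeq : ∀ P : (∀ i, 𝒳 i) → ℝ, (∀ x, M x = 0 → P x = 0) → klD P M = Gf P :=
    fun P hs => klD_eq_G hs
  have hGM : Gf M = 0 := by rw [← hGeq M (fun _ hx => hx), klD_self]
  have hGcont : Continuous Gf := by
    rw [hGf_def]
    apply continuous_finset_sum
    intro x _
    have h1 : Continuous fun P : (∀ i, 𝒳 i) → ℝ => P x * Real.logb 2 (P x) := by
      have heq : (fun P : (∀ i, 𝒳 i) → ℝ => P x * Real.logb 2 (P x)) =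
          fun P => (P x * Real.log (P x)) * (Real.log 2)⁻¹ := by
        funext P; rw [Real.logb]; ring
      rw [heq]
      exact (Real.continuous_mul_log.comp (continuous_apply x)).mul continuous_const
    exact h1.sub ((continuous_apply x).mul continuous_const)
  set Dom : Set ((∀ i, 𝒳 i) → ℝ) := {P | probVec P ∧ ∀ x, M x = 0 → P x = 0} with hDom_def
  have hMDom : M ∈ Dom := ⟨⟨hM0, hM1⟩, fun _ hx => hx⟩
  have hDomOrth : ∀ P ∈ Dom, ∀ x, 0 ≤ P x := fun P hP => hP.1.1
  have hDomCompact : IsCompact Dom := isCompact_probSet M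
  have hDomConvex : Convex ℝ Dom := convex_probSet M
  set Bh : ℝ := (∑ j : Fin k, (Fintype.card (𝒳 j) : ℝ)) / Real.log 2 with hBh_def
  have hhB : ∀ (j : Fin k) (P : (∀ i, 𝒳 i) → ℝ), probVec P → shEnt (marg P j) ≤ Bh := by
    intro j P hP
    have h1 : shEnt (marg P j) ≤ (Fintype.card (𝒳 j) : ℝ) / Real.log 2 :=
      shEnt_le_of (fun a => marg_nonneg_s19 hP.1 j a)
    have h2 : (Fintype.card (𝒳 j) : ℝ) ≤ ∑ j' : Fin k, (Fintype.card (𝒳 j') : ℝ) :=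
      Finset.single_le_sum (f := fun j' : Fin k => (Fintype.card (𝒳 j') : ℝ))
        (fun j' _ => by positivity) (Finset.mem_univ j)
    exact h1.trans (div_le_div_of_nonneg_right h2 aux_log2_pos.le)
  have hiInfle : ∀ (P : (∀ i, 𝒳 i) → ℝ) (j : Fin k),
      (⨅ j' : Fin k, shEnt (marg P j')) ≤ shEnt (marg P j) :=
    fun P j => ciInf_le (Finite.bddBelow_range _) j
  set W : Set ℝ := { w : ℝ | ∃ P : (∀ i, 𝒳 i) → ℝ, probVec P ∧ (∀ x, M x = 0 → P x = 0) ∧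
        klD P M ≤ r ∧ w = ⨅ j : Fin k, shEnt (marg P j) } with hW_def
  have hWne : W.Nonempty := by
    refine ⟨⨅ j : Fin k, shEnt (marg M j), M, ⟨hM0, hM1⟩, fun _ hx => hx, ?_, rfl⟩
    rw [klD_self]; exact hr
  have hWbdd : BddAbove W := by
    refine ⟨Bh, ?_⟩
    rintro w ⟨P, hP, hsupp, _, rfl⟩
    obtain ⟨j⟩ := hkne
    exact (hiInfle P j).trans (hhB j P hP)
  set L : Set ℝ := { v : ℝ | ∃ t : ℝ, 0 ≤ t ∧ ∃ θ : Fin k → ℝ, probVec θ ∧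
        v = sSup { w : ℝ | ∃ P : (∀ i, 𝒳 i) → ℝ, probVec P ∧
          (∀ x, M x = 0 → P x = 0) ∧
          w = r * t + (∑ j, θ j * shEnt (marg P j)) - t * klD P M } } with hL_def
  -- bounded above of the inner sets
  have hTbddAbove : ∀ (t : ℝ), 0 ≤ t → ∀ (θ : Fin k → ℝ), probVec θ →
      BddAbove { w : ℝ | ∃ P : (∀ i, 𝒳 i) → ℝ, probVec P ∧
          (∀ x, M x = 0 → P x = 0) ∧
          w = r * t + (∑ j, θ j * shEnt (marg P j)) - t * klD P M } := by
    intro t ht θ hθ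
    refine ⟨r * t + Bh + t * ((Fintype.card (∀ i, 𝒳 i) : ℝ) / Real.log 2), ?_⟩
    rintro w' ⟨Q, hQ, hQsupp, rfl⟩
    have h1 : ∑ j, θ j * shEnt (marg Q j) ≤ Bh := by
      have hb : ∀ j ∈ Finset.univ, θ j * shEnt (marg Q j) ≤ θ j * Bh := fun j _ =>
        mul_le_mul_of_nonneg_left (hhB j Q hQ) (hθ.1 j)
      calc ∑ j, θ j * shEnt (marg Q j) ≤ ∑ j, θ j * Bh := Finset.sum_le_sum hb
      _ = (∑ j, θ j) * Bh := by rw [Finset.sum_mul]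
      _ = Bh := by rw [hθ.2, one_mul]
    have h2 : -(Fintype.card (∀ i, 𝒳 i) : ℝ) / Real.log 2 ≤ klD Q M :=
      klD_ge hQ.1 hM0 hMle1 hQsupp
    have h3 : t * (-(Fintype.card (∀ i, 𝒳 i) : ℝ) / Real.log 2) ≤ t * klD Q M :=
      mul_le_mul_of_nonneg_left h2 ht
    have h4 : t * (-(Fintype.card (∀ i, 𝒳 i) : ℝ) / Real.log 2)
        = -(t * ((Fintype.card (∀ i, 𝒳 i) : ℝ) / Real.log 2)) := by ring
    linarith
  have hlow : ∀ v ∈ L, sSup W ≤ v := by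
    rintro v ⟨t, ht, θ, hθ, rfl⟩
    apply csSup_le hWne
    rintro w ⟨P, hP, hsupp, hklr, rfl⟩
    have h5 : (⨅ j : Fin k, shEnt (marg P j)) ≤ ∑ j, θ j * shEnt (marg P j) := by
      have h6 : ∀ j ∈ Finset.univ,
          θ j * (⨅ j' : Fin k, shEnt (marg P j')) ≤ θ j * shEnt (marg P j) :=
        fun j _ => mul_le_mul_of_nonneg_left (hiInfle P j) (hθ.1 j)
      calc (⨅ j' : Fin k, shEnt (marg P j'))
          = (∑ j, θ j) * (⨅ j' : Fin k, shEnt (marg P j')) := by rw [hθ.2, one_mul]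
      _ = ∑ j, θ j * (⨅ j' : Fin k, shEnt (marg P j')) := by rw [Finset.sum_mul]
      _ ≤ ∑ j, θ j * shEnt (marg P j) := Finset.sum_le_sum h6
    have h7 : t * klD P M ≤ t * r := mul_le_mul_of_nonneg_left hklr ht
    have h8 : (⨅ j : Fin k, shEnt (marg P j)) ≤
        r * t + (∑ j, θ j * shEnt (marg P j)) - t * klD P M := by linarith
    exact h8.trans (le_csSup (hTbddAbove t ht θ hθ) ⟨P, hP, hsupp, rfl⟩)
  have hk0 : (k : ℝ) ≠ 0 := Nat.cast_ne_zero.mpr (by omega)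
  have hLne : L.Nonempty := by
    refine ⟨_, 0, le_refl 0, fun _ => (k : ℝ)⁻¹, ⟨fun _ => by positivity, ?_⟩, rfl⟩
    rw [Finset.sum_const, Finset.card_univ, Fintype.card_fin, nsmul_eq_mul]
    field_simp
  have hLbdd : BddBelow L := ⟨sSup W, fun v hv => hlow v hv⟩
  have hge : sSup W ≤ sInf L := le_csInf hLne hlow
  -- attainment
  set F0 : ((∀ i, 𝒳 i) → ℝ) → ℝ := fun P => ⨅ j : Fin k, shEnt (marg P j) with hF0_def
  have hF0cont : Continuous F0 := by
    have heq : F0 = fun P => Finset.univ.inf' Finset.univ_nonempty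
        (fun j => shEnt (marg P j)) := by
      funext P
      rw [Finset.inf'_univ_eq_ciInf, hF0_def]
    rw [heq]
    exact continuous_finset_inf' _ _ (fun j => continuous_shEnt_marg j)
  have hKcompact : IsCompact (Dom ∩ {P | Gf P ≤ r}) :=
    hDomCompact.inter_right (isClosed_le hGcont continuous_const)
  have hKne : (Dom ∩ {P | Gf P ≤ r}).Nonempty := ⟨M, hMDom, by
    show Gf M ≤ r
    rw [hGM]; exact hr⟩
  obtain ⟨Pstar, hPstarK, hPstarMax⟩ := hKcompact.exists_isMaxOn hKne hF0cont.continuousOn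
  have hPstarfeas : klD Pstar M ≤ r := by
    rw [hGeq Pstar hPstarK.1.2]; exact hPstarK.2
  have hSeq : sSup W = F0 Pstar := by
    apply le_antisymm
    · apply csSup_le hWne
      rintro w ⟨P, hP, hsupp, hklr, rfl⟩
      have hPK : P ∈ Dom ∩ {P | Gf P ≤ r} :=
        ⟨⟨hP, hsupp⟩, by show Gf P ≤ r; rw [← hGeq P hsupp]; exact hklr⟩
      exact hPstarMax hPK
    · exact le_csSup hWbdd ⟨Pstar, hPstarK.1.1, hPstarK.1.2, hPstarfeas, rfl⟩
  -- hard direction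
  have hup : sInf L ≤ sSup W := by
    have key : ∀ ε : ℝ, 0 < ε → sInf L ≤ sSup W + ε := by
      intro ε hε
      set S := sSup W with hS_def
      set φ : ((∀ i, 𝒳 i) → ℝ) → (Fin (k+1) → ℝ) :=
        fun P => Fin.cons (r - Gf P) (fun j => shEnt (marg P j)) with hφ_def
      set A : Set (Fin (k+1) → ℝ) := {y | ∃ P ∈ Dom, ∀ i, y i ≤ φ P i} with hA_def
      have hφcont : Continuous φ := by
        refine continuous_pi fun i => ?_
        refine Fin.cases ?_ ?_ i
        · simp only [hφ_def, Fin.cons_zero]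
          exact continuous_const.sub hGcont
        · intro j
          simp only [hφ_def, Fin.cons_succ]
          exact continuous_shEnt_marg j
      have hAconv : Convex ℝ A := by
        intro y hy z hz a b ha hb hab
        obtain ⟨P, hP, hyP⟩ := hy
        obtain ⟨Q, hQ, hzQ⟩ := hz
        refine ⟨a • P + b • Q, hDomConvex hP hQ ha hb hab, fun i => ?_⟩
        refine Fin.cases ?_ ?_ i
        · have hy0 : y 0 ≤ r - Gf P := by simpa [hφ_def] using hyP 0
          have hz0 : z 0 ≤ r - Gf Q := by simpa [hφ_def] using hzQ 0
          have hGc : Gf (a • P + b • Q) ≤ a * Gf P + b * Gf Q := by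
            have := (convexOn_G M).2 (hDomOrth P hP) (hDomOrth Q hQ) ha hb hab
            simpa [smul_eq_mul, hGf_def] using this
          have hcomb : (a • y + b • z) 0 = a * y 0 + b * z 0 := by
            simp [smul_eq_mul]
          have hφ0 : φ (a • P + b • Q) 0 = r - Gf (a • P + b • Q) := by
            simp [hφ_def]
          rw [hcomb, hφ0]
          have e1 : a * y 0 ≤ a * (r - Gf P) := mul_le_mul_of_nonneg_left hy0 ha
          have e2 : b * z 0 ≤ b * (r - Gf Q) := mul_le_mul_of_nonneg_left hz0 hb
          have e1' : a * (r - Gf P) = a * r - a * Gf P := by ring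
          have e2' : b * (r - Gf Q) = b * r - b * Gf Q := by ring
          have hr1 : a * r + b * r = r := by rw [← add_mul, hab, one_mul]
          linarith
        · intro j
          have hys : y j.succ ≤ shEnt (marg P j) := by simpa [hφ_def] using hyP j.succ
          have hzs : z j.succ ≤ shEnt (marg Q j) := by simpa [hφ_def] using hzQ j.succ
          have hcc : a * shEnt (marg P j) + b * shEnt (marg Q j) ≤
              shEnt (marg (a • P + b • Q) j) := by
            have := (concaveOn_shEnt_marg j).2 (hDomOrth P hP) (hDomOrth Q hQ) ha hb hab
            simpa [smul_eq_mul] using this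
          have hcomb : (a • y + b • z) j.succ = a * y j.succ + b * z j.succ := by
            simp [smul_eq_mul]
          have hφs : φ (a • P + b • Q) j.succ = shEnt (marg (a • P + b • Q) j) := by
            simp [hφ_def]
          rw [hcomb, hφs]
          have e1 : a * y j.succ ≤ a * shEnt (marg P j) := mul_le_mul_of_nonneg_left hys ha
          have e2 : b * z j.succ ≤ b * shEnt (marg Q j) := mul_le_mul_of_nonneg_left hzs hb
          linarith
      have hAclosed : IsClosed A := by
        have hO : IsClosed {y : Fin (k+1) → ℝ | ∀ i, y i ≤ 0} := by
          have heq : {y : Fin (k+1) → ℝ | ∀ i, y i ≤ 0}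
              = ⋂ i, {y : Fin (k+1) → ℝ | y i ≤ 0} := by
            ext y; simp [Set.mem_iInter]
          rw [heq]
          exact isClosed_iInter fun i => isClosed_le (continuous_apply i) continuous_const
        have hAeq : A = (φ '' Dom) + {y : Fin (k+1) → ℝ | ∀ i, y i ≤ 0} := by
          ext y
          constructor
          · rintro ⟨P, hP, hyP⟩
            refine Set.mem_add.mpr ⟨φ P, Set.mem_image_of_mem _ hP, y - φ P,
              fun i => ?_, by abel⟩
            simpa using sub_nonpos.mpr (hyP i)
          · intro hy
            obtain ⟨p, hp, q, hq, rfl⟩ := Set.mem_add.mp hy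
            obtain ⟨P, hP, rfl⟩ := hp
            refine ⟨P, hP, fun i => ?_⟩
            have hqi : q i ≤ 0 := hq i
            have : (φ P + q) i = φ P i + q i := rfl
            rw [this]
            linarith
        rw [hAeq]
        exact IsClosed.add_left_of_isCompact hO (hDomCompact.image hφcont)
      have hbnot : (Fin.cons 0 (fun _ : Fin k => S + ε) : Fin (k+1) → ℝ) ∉ A := by
        rintro ⟨P, hP, hyP⟩
        have h0' : (0:ℝ) ≤ r - Gf P := by
          simpa [hφ_def] using hyP 0
        have hfeas : klD P M ≤ r := by rw [hGeq P hP.2]; linarith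
        have hWm : (⨅ j : Fin k, shEnt (marg P j)) ∈ W := ⟨P, hP.1, hP.2, hfeas, rfl⟩
        have h1 : (⨅ j : Fin k, shEnt (marg P j)) ≤ S := le_csSup hWbdd hWm
        have h2 : S + ε ≤ ⨅ j : Fin k, shEnt (marg P j) := by
          apply le_ciInf
          intro j
          simpa [hφ_def] using hyP j.succ
        linarith
      obtain ⟨f, u, hfa, hub⟩ := geometric_hahn_banach_closed_point hAconv hAclosed hbnot
      set c : Fin (k+1) → ℝ := fun i => f (fun j => if i = j then (1:ℝ) else 0) with hc_def
      have hfy : ∀ y : Fin (k+1) → ℝ, f y = ∑ i, y i * c i := by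
        intro y
        conv_lhs => rw [pi_eq_sum_univ y]
        rw [map_sum]
        refine Finset.sum_congr rfl fun i _ => ?_
        rw [map_smul, smul_eq_mul]
      have hφMA : φ M ∈ A := ⟨M, hMDom, fun i => le_refl _⟩
      have hcnn : ∀ i, 0 ≤ c i := by
        intro i
        by_contra hci
        push_neg at hci
        have hmem : ∀ n : ℕ,
            (φ M - (n:ℝ) • fun j => if i = j then (1:ℝ) else 0) ∈ A := by
          intro n
          refine ⟨M, hMDom, fun i' => ?_⟩
          have hnn : (0:ℝ) ≤ (n:ℝ) * (if i = i' then (1:ℝ) else 0) := by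
            split <;> simp
          have : (φ M - (n:ℝ) • fun j => if i = j then (1:ℝ) else 0) i'
              = φ M i' - (n:ℝ) * (if i = i' then (1:ℝ) else 0) := rfl
          rw [this]
          linarith
        have hfv : ∀ n : ℕ, f (φ M) - (n:ℝ) * c i < u := by
          intro n
          have h := hfa _ (hmem n)
          simp only [map_sub, map_smul, smul_eq_mul] at h
          exact h
        obtain ⟨n, hn⟩ := exists_nat_gt ((u - f (φ M)) / (-c i))
        rw [div_lt_iff₀ (neg_pos.mpr hci)] at hn
        have hnc : (n:ℝ) * (-c i) = -((n:ℝ) * c i) := by ring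
        rw [hnc] at hn
        have := hfv n
        linarith
      set σ : ℝ := ∑ j : Fin k, c j.succ with hσ_def
      have hσnn : 0 ≤ σ := Finset.sum_nonneg fun j _ => hcnn j.succ
      have hfb : f (Fin.cons 0 (fun _ : Fin k => S + ε)) = σ * (S + ε) := by
        rw [hfy, Fin.sum_univ_succ]
        simp only [Fin.cons_zero, Fin.cons_succ, zero_mul, zero_add]
        rw [hσ_def, Finset.sum_mul]
        exact Finset.sum_congr rfl fun j _ => by ring
      have hfφ : ∀ P, f (φ P) = c 0 * (r - Gf P)
          + ∑ j : Fin k, c j.succ * shEnt (marg P j) := by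
        intro P
        rw [hfy, Fin.sum_univ_succ]
        simp only [hφ_def, Fin.cons_zero, Fin.cons_succ]
        congr 1
        · ring
        · exact Finset.sum_congr rfl fun j _ => by ring
      have hσpos : 0 < σ := by
        rcases hσnn.lt_or_eq with h | h
        · exact h
        · exfalso
          have hσ0 : σ = 0 := h.symm
          have hzero : ∀ j : Fin k, c j.succ = 0 := by
            intro j
            have hz := (Finset.sum_eq_zero_iff_of_nonneg
              (fun j (_ : j ∈ Finset.univ) => hcnn j.succ)).mp (hσ_def ▸ hσ0)
            exact hz j (Finset.mem_univ j)
          rw [hfb, hσ0, zero_mul] at hub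
          have hfM : f (φ M) = c 0 * r := by
            rw [hfφ M, hGM]
            simp [hzero]
          have hlt : f (φ M) < u := hfa _ hφMA
          have hc0r : 0 ≤ c 0 * r := mul_nonneg (hcnn 0) hr
          rw [hfM] at hlt
          linarith
      have hσne : σ ≠ 0 := ne_of_gt hσpos
      have hθprob : probVec (fun j : Fin k => c j.succ / σ) := by
        constructor
        · intro j; exact div_nonneg (hcnn j.succ) hσnn
        · rw [← Finset.sum_div, ← hσ_def, div_self hσne]
      set T : Set ℝ := { w : ℝ | ∃ P : (∀ i, 𝒳 i) → ℝ, probVec P ∧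
          (∀ x, M x = 0 → P x = 0) ∧
          w = r * (c 0 / σ) + (∑ j, (c j.succ / σ) * shEnt (marg P j))
            - (c 0 / σ) * klD P M } with hT_def
      have hTmemL : sSup T ∈ L :=
        ⟨c 0 / σ, div_nonneg (hcnn 0) hσnn, fun j => c j.succ / σ, hθprob, rfl⟩
      have hTne : T.Nonempty := ⟨_, M, ⟨hM0, hM1⟩, fun _ hx => hx, rfl⟩
      have hTle : ∀ w ∈ T, w ≤ S + ε := by
        rintro w ⟨P, hP, hsupp, rfl⟩
        have hPA : φ P ∈ A := ⟨P, ⟨hP, hsupp⟩, fun i => le_refl _⟩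
        have h1 : f (φ P) < u := hfa _ hPA
        have h2 : u < σ * (S + ε) := by rw [← hfb]; exact hub
        have h3 : c 0 * (r - Gf P) + ∑ j : Fin k, c j.succ * shEnt (marg P j)
            < σ * (S + ε) := by
          rw [← hfφ P]; linarith
        have hsum : σ * (∑ j : Fin k, (c j.succ / σ) * shEnt (marg P j))
            = ∑ j : Fin k, c j.succ * shEnt (marg P j) := by
          rw [Finset.mul_sum]
          exact Finset.sum_congr rfl fun j _ => by field_simp
        have e1 : σ * (r * (c 0 / σ)) = c 0 * r := by field_simp
        have e2 : σ * ((c 0 / σ) * Gf P) = c 0 * Gf P := by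
          rw [← mul_assoc]
          congr 1
          field_simp
        have h4 : σ * (r * (c 0 / σ) + (∑ j, (c j.succ / σ) * shEnt (marg P j))
              - (c 0 / σ) * klD P M)
            = c 0 * (r - Gf P) + ∑ j : Fin k, c j.succ * shEnt (marg P j) := by
          rw [hGeq P hsupp]
          calc σ * (r * (c 0 / σ) + (∑ j, (c j.succ / σ) * shEnt (marg P j))
              - (c 0 / σ) * Gf P)
              = σ * (r * (c 0 / σ)) + σ * (∑ j, (c j.succ / σ) * shEnt (marg P j))
                - σ * ((c 0 / σ) * Gf P) := by ring
          _ = c 0 * r + (∑ j : Fin k, c j.succ * shEnt (marg P j)) - c 0 * Gf P := by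
                rw [hsum, e1, e2]
          _ = c 0 * (r - Gf P) + ∑ j : Fin k, c j.succ * shEnt (marg P j) := by ring
        have h5 : σ * (r * (c 0 / σ) + (∑ j, (c j.succ / σ) * shEnt (marg P j))
            - (c 0 / σ) * klD P M) < σ * (S + ε) := by
          rw [h4]; exact h3
        exact le_of_lt ((mul_lt_mul_iff_right₀ hσpos).mp h5)
      exact (csInf_le hLbdd hTmemL).trans (csSup_le hTne hTle)
    by_contra hcon
    push_neg at hcon
    have hkey := key ((sInf L - sSup W) / 2) (by linarith)
    linarith
  refine ⟨le_antisymm hup hge, Pstar, hPstarK.1.1, hPstarK.1.2, hPstarfeas, hSeq.symm⟩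
end
end
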